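/- arXiv:2412.19822 — 7 statements merged into one kernel-verified Lean document; each statement's English description precedes it below -/
import Mathlib

section
/- Let N be an odd positive integer and let λ_0, …, λ_N be pairwise distinct positive real numbers. Then the functions b_0, …, b_N, where b_j(x) := j!·Φ_N^{(N−j)}(x), form a basis of the real vector space U_N spanned by x ↦ exp(λ_j x), j = 0, …, N. -/
/-!
The Taylor data of the `b_j` at `0` is triangular: `b_j^{(k)}(0) = j! Φ^{(N-j+k)}(0)` vanishes
for `k < j` and equals `j!` for `k = j`, so `b_0, …, b_N` are linearly independent. Since `U_N` is
closed under differentiation, every `b_j` lies in `U_N`, and `dim U_N ≤ N + 1` forces equality.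
-/

open Submodule
open scoped ContDiff Nat

theorem linearIndependent_of_iteratedDeriv_isLowerTriangular {𝕜 : Type*}
    [NontriviallyNormedField 𝕜] {n : ℕ} {f : Fin n → 𝕜 → 𝕜} {x₀ : 𝕜}
    (hf : ∀ j, ContDiffAt 𝕜 n (f j) x₀)
    (h_lt : ∀ j k : Fin n, k < j → iteratedDeriv k (f j) x₀ = 0)
    (h_diag : ∀ j : Fin n, iteratedDeriv j (f j) x₀ ≠ 0) :
    LinearIndependent 𝕜 f := by
  set A : Matrix (Fin n) (Fin n) 𝕜 := .of fun k j => iteratedDeriv k (f j) x₀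
  have hA : A.det ≠ 0 := by
    rw [Matrix.det_of_isLowerTriangular A fun k j hkj => h_lt j k hkj]
    exact Finset.prod_ne_zero_iff.2 fun j _ => h_diag j
  rw [Fintype.linearIndependent_iff]
  intro d hd
  refine congrFun (Matrix.eq_zero_of_mulVec_eq_zero hA (funext fun k => ?_))
  have hk := congrArg (fun g => iteratedDeriv k g x₀) hd
  rw [iteratedDeriv_sum (f := fun j => d j • f j)
    fun j _ => ((hf j).const_smul (d j)).of_le (mod_cast k.is_lt.le)] at hk
  simpa [A, Matrix.mulVec, dotProduct, mul_comm,
    iteratedDeriv_const_smul_field] using hk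

/-- The space `U_N` of the paper. -/
def expSpan {ι : Type*} (l : ι → ℝ) : Submodule ℝ (ℝ → ℝ) :=
  span ℝ (Set.range fun i x => Real.exp (l i * x))

section expSpan

variable {ι : Type*} (l : ι → ℝ) {f : ℝ → ℝ}

theorem contDiff_of_mem_expSpan (hf : f ∈ expSpan l) : ContDiff ℝ ∞ f := by
  induction hf using span_induction with
  | mem _ h => obtain ⟨i, rfl⟩ := h; fun_prop
  | zero => exact contDiff_const
  | add _ _ _ _ hf hg => exact hf.add hg
  | smul a _ _ hf => exact hf.const_smul a

theorem deriv_mem_expSpan (hf : f ∈ expSpan l) : deriv f ∈ expSpan l := by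
  induction hf using span_induction with
  | mem _ h =>
    obtain ⟨i, rfl⟩ := h
    rw [show deriv (fun x => Real.exp (l i * x)) = l i • fun x => Real.exp (l i * x) from
      funext fun x => by simp [mul_comm]]
    exact smul_mem _ _ (subset_span ⟨i, rfl⟩)
  | zero => simp
  | add g h hg hh ihg ihh =>
    have hg' := (contDiff_of_mem_expSpan l hg).differentiable (by simp)
    have hh' := (contDiff_of_mem_expSpan l hh).differentiable (by simp)
    rw [show deriv (g + h) = deriv g + deriv h from funext fun x => deriv_add (hg' x) (hh' x)]
    exact add_mem ihg ihh
  | smul a g _ ih =>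
    rw [show deriv (a • g) = a • deriv g from funext fun x => deriv_const_smul_field a g]
    exact smul_mem _ a ih

theorem iteratedDeriv_mem_expSpan (n : ℕ) (hf : f ∈ expSpan l) :
    iteratedDeriv n f ∈ expSpan l := by
  induction n with
  | zero => simpa
  | succ n ih => rw [iteratedDeriv_succ]; exact deriv_mem_expSpan l ih

end expSpan

theorem b_family_is_basis_general
    (N : ℕ)
    (l : Fin (N + 1) → ℝ)
    (Φ : ℝ → ℝ)
    (hΦmem : Φ ∈ Submodule.span ℝ
        (Set.range (fun j : Fin (N + 1) => fun x : ℝ => Real.exp (l j * x))))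
    (hΦ0 : ∀ j < N, iteratedDeriv j Φ 0 = 0)
    (hΦN : iteratedDeriv N Φ 0 = 1)
    (b : Fin (N + 1) → ℝ → ℝ)
    (hb : ∀ j : Fin (N + 1),
        b j = fun x => (Nat.factorial j : ℝ) * iteratedDeriv (N - (j : ℕ)) Φ x) :
    LinearIndependent ℝ b ∧
    Submodule.span ℝ (Set.range b) =
      Submodule.span ℝ
        (Set.range (fun j : Fin (N + 1) => fun x : ℝ => Real.exp (l j * x))) := by
  change _ ∧ _ = expSpan l
  have hb_mem (j : Fin (N + 1)) : b j ∈ expSpan l := by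
    rw [hb j]
    exact smul_mem _ _ (iteratedDeriv_mem_expSpan l _ hΦmem)
  have hb_deriv (j : Fin (N + 1)) (k : ℕ) :
      iteratedDeriv k (b j) 0 = j ! * iteratedDeriv (k + (N - j)) Φ 0 := by
    simp only [hb j, iteratedDeriv_const_mul_field, iteratedDeriv_eq_iterate,
      Function.iterate_add_apply]
  have hb_li : LinearIndependent ℝ b := by
    refine linearIndependent_of_iteratedDeriv_isLowerTriangular (x₀ := 0)
      (fun j => (contDiff_of_mem_expSpan l (hb_mem j)).contDiffAt.of_le (mod_cast le_top))
      (fun j k hkj => ?_) (fun j => ?_)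
    · rw [hb_deriv, hΦ0 _ (by omega), mul_zero]
    · rw [hb_deriv, Nat.add_sub_cancel' (Nat.lt_succ_iff.mp j.is_lt), hΦN, mul_one]
      positivity
  have : FiniteDimensional ℝ (expSpan l) := FiniteDimensional.span_of_finite ℝ (Set.finite_range _)
  refine ⟨hb_li, eq_of_le_of_finrank_le (span_le.2 (Set.range_subset_iff.2 hb_mem)) ?_⟩
  calc Module.finrank ℝ (expSpan l) ≤ N + 1 :=
        (finrank_range_le_card (R := ℝ) _).trans_eq (Fintype.card_fin _)
    _ = Module.finrank ℝ (span ℝ (Set.range b)) := by simp [finrank_span_eq_card hb_li]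

/-- For `N` odd and pairwise distinct positive `λ_0, …, λ_N`, the functions
`b_j(x) = j! · Φ_N^{(N-j)}(x)`, `j = 0, …, N`, form a basis of the real vector space `U_N`
spanned by the exponentials `x ↦ exp(λ_j x)`. -/
theorem b_family_is_basis
    (N : ℕ) (hN : 0 < N) (hNodd : Odd N)
    (l : Fin (N + 1) → ℝ) (hl : Function.Injective l) (hlpos : ∀ j, 0 < l j)
    (Φ : ℝ → ℝ)
    (hΦmem : Φ ∈ Submodule.span ℝ
        (Set.range (fun j : Fin (N + 1) => fun x : ℝ => Real.exp (l j * x))))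
    (hΦ0 : ∀ j < N, iteratedDeriv j Φ 0 = 0)
    (hΦN : iteratedDeriv N Φ 0 = 1)
    (b : Fin (N + 1) → ℝ → ℝ)
    (hb : ∀ j : Fin (N + 1),
        b j = fun x => (Nat.factorial j : ℝ) * iteratedDeriv (N - (j : ℕ)) Φ x) :
    LinearIndependent ℝ b ∧
    Submodule.span ℝ (Set.range b) =
      Submodule.span ℝ
        (Set.range (fun j : Fin (N + 1) => fun x : ℝ => Real.exp (l j * x))) :=
  b_family_is_basis_general N l Φ hΦmem hΦ0 hΦN b hb
end

section
/- Let N be an odd positive integer and let λ_0, …, λ_N be pairwise distinct nonnegative real numbers. Then the fundamental function satisfies Φ_N^{(j)}(x) ≥ 0 for every real x > 0 and every integer j ≥ N. -/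
/-!
Write `Φ = ∑ cᵢ exp (λᵢ x)`. The conditions at `0` say `∑ cᵢ λᵢ ^ k = δ_{k,N}` for `k ≤ N`, so
`f ↦ ∑ cᵢ f(λᵢ)` is the `N`-th divided difference at the nodes `λᵢ`: the leading coefficient of
the interpolating polynomial of degree `≤ N`. Hence `Φ^{(j)}(x)` is the divided difference of
`g(t) = t ^ j * exp (x * t)`, which by iterated Rolle equals `g^{(N)}(ξ) / N!` for some `ξ` in the
convex hull of the nodes. By Leibniz's rule every derivative of `g` is nonnegative on `[0, ∞)`.
-/

open Polynomial Finset
open scoped Nat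

theorem sum_mul_eval_eq_coeff {ι R : Type*} [CommSemiring R] {s : Finset ι} {c t : ι → R}
    {n : ℕ} (hlt : ∀ k < n, ∑ i ∈ s, c i * t i ^ k = 0) (heq : ∑ i ∈ s, c i * t i ^ n = 1)
    {p : R[X]} (hp : p.natDegree ≤ n) : ∑ i ∈ s, c i * p.eval (t i) = p.coeff n := calc
  ∑ i ∈ s, c i * p.eval (t i) = ∑ k ∈ range (n + 1), p.coeff k * ∑ i ∈ s, c i * t i ^ k := by
    simp only [eval_eq_sum_range' (Nat.lt_succ_of_le hp), mul_sum]
    rw [sum_comm]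
    exact sum_congr rfl fun _ _ => sum_congr rfl fun _ _ => mul_left_comm _ _ _
  _ = p.coeff n := by
    rw [sum_range_succ, sum_eq_zero fun k hk => by rw [hlt k (mem_range.mp hk), mul_zero], heq,
      mul_one, zero_add]

theorem exists_iteratedDeriv_eq_zero_of_strictMono {n : ℕ} {f : ℝ → ℝ} (hf : ContDiff ℝ n f)
    {z : Fin (n + 1) → ℝ} (hz : StrictMono z) (hfz : ∀ i, f (z i) = 0) :
    ∃ ξ ∈ Set.Icc (z 0) (z (Fin.last n)), iteratedDeriv n f ξ = 0 := by
  induction n generalizing f with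
  | zero => exact ⟨z 0, ⟨le_rfl, le_rfl⟩, by simpa using hfz 0⟩
  | succ n ih =>
    obtain ⟨hdiff, -, hf'⟩ := (contDiff_succ_iff_deriv (n := n)).mp (by exact_mod_cast hf)
    have rolle (i : Fin (n + 1)) : ∃ c ∈ Set.Ioo (z i.castSucc) (z i.succ), deriv f c = 0 :=
      exists_deriv_eq_zero (hz i.castSucc_lt_succ) hdiff.continuous.continuousOn
        (by rw [hfz, hfz])
    choose w hw hw0 using rolle
    have hw_mono : StrictMono w := fun i j hij => calc
      w i < z i.succ := (hw i).2
      _ ≤ z j.castSucc := hz.monotone (Fin.succ_le_castSucc_iff.mpr hij)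
      _ < w j := (hw j).1
    obtain ⟨ξ, ⟨hξ0, hξlast⟩, hξ⟩ := ih hf' hw_mono hw0
    refine ⟨ξ, ⟨(hw 0).1.le.trans hξ0, hξlast.trans (hw (Fin.last n)).2.le⟩, ?_⟩
    rwa [iteratedDeriv_succ']

namespace Polynomial

variable {𝕜 : Type*} [NontriviallyNormedField 𝕜]

theorem iteratedDeriv_eval (p : 𝕜[X]) (n : ℕ) :
    iteratedDeriv n (fun x => p.eval x) = fun x => (derivative^[n] p).eval x := by
  induction n generalizing p with
  | zero => simp
  | succ n ih =>
    rw [iteratedDeriv_succ', Function.iterate_succ_apply, ← ih]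
    congr 1
    funext x
    exact p.deriv

theorem iteratedDeriv_eval_of_natDegree_le {p : 𝕜[X]} {n : ℕ} (hp : p.natDegree ≤ n) (x : 𝕜) :
    iteratedDeriv n (fun x => p.eval x) x = n ! * p.coeff n := by
  have hconst : (derivative^[n] p).natDegree ≤ 0 := by
    have := natDegree_iterate_derivative p n
    omega
  simp only [iteratedDeriv_eval]
  rw [eq_C_of_natDegree_le_zero hconst, eval_C, coeff_iterate_derivative, zero_add,
    Nat.descFactorial_self, nsmul_eq_mul]

end Polynomial

theorem exists_iteratedDeriv_eq_factorial_mul_coeff {n : ℕ} {f : ℝ → ℝ} (hf : ContDiff ℝ n f)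
    {s : Finset ℝ} (hs : #s = n + 1) {p : ℝ[X]} (hp : p.natDegree ≤ n)
    (hpf : ∀ x ∈ s, p.eval x = f x) :
    ∃ ξ ∈ convexHull ℝ (s : Set ℝ), iteratedDeriv n f ξ = n ! * p.coeff n := by
  set z := s.orderEmbOfFin hs
  have hp_smooth : ContDiff ℝ n (fun x => p.eval x) := by
    simpa only [coe_aeval_eq_eval] using p.contDiff_aeval (R := ℝ) (𝕜 := ℝ) n
  obtain ⟨ξ, hξ, hξ0⟩ := exists_iteratedDeriv_eq_zero_of_strictMono (hf.sub hp_smooth)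
    z.strictMono fun i => by rw [hpf _ (s.orderEmbOfFin_mem hs i), sub_self]
  rw [iteratedDeriv_fun_sub hf.contDiffAt hp_smooth.contDiffAt,
    iteratedDeriv_eval_of_natDegree_le hp, sub_eq_zero] at hξ0
  refine ⟨ξ, segment_subset_convexHull (s.orderEmbOfFin_mem hs 0)
    (s.orderEmbOfFin_mem hs (Fin.last n)) ?_, hξ0⟩
  rwa [segment_eq_Icc (z.monotone (Fin.zero_le _))]

theorem iteratedDeriv_sum_mul_exp {ι : Type*} (s : Finset ι) (c a : ι → ℝ) (n : ℕ) :
    iteratedDeriv n (fun y => ∑ i ∈ s, c i * Real.exp (a i * y))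
      = fun y => ∑ i ∈ s, c i * a i ^ n * Real.exp (a i * y) := by
  funext y
  rw [iteratedDeriv_fun_sum fun i _ => by fun_prop]
  refine sum_congr rfl fun i _ => ?_
  rw [iteratedDeriv_const_mul_field, iteratedDeriv_exp_const_mul, mul_assoc]

theorem iteratedDeriv_pow_mul_exp_nonneg {x t : ℝ} (hx : 0 ≤ x) (ht : 0 ≤ t) (j n : ℕ) :
    0 ≤ iteratedDeriv n (fun s => s ^ j * Real.exp (x * s)) t := by
  rw [iteratedDeriv_fun_mul (by fun_prop) (by fun_prop)]
  simp only [iteratedDeriv_pow, iteratedDeriv_exp_const_mul]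
  positivity

theorem fundamental_function_derivatives_nonneg_general
    (N : ℕ)
    (l : Fin (N + 1) → ℝ) (hl : Function.Injective l) (hlnonneg : ∀ j, 0 ≤ l j)
    (Φ : ℝ → ℝ)
    (hΦmem : Φ ∈ Submodule.span ℝ
        (Set.range (fun j : Fin (N + 1) => fun x : ℝ => Real.exp (l j * x))))
    (hΦ0 : ∀ j < N, iteratedDeriv j Φ 0 = 0)
    (hΦN : iteratedDeriv N Φ 0 = 1) :
    ∀ x : ℝ, 0 < x → ∀ j : ℕ, N ≤ j → 0 ≤ iteratedDeriv j Φ x := by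
  obtain ⟨c, hc⟩ := (Submodule.mem_span_range_iff_exists_fun ℝ).mp hΦmem
  have hΦ (n : ℕ) : iteratedDeriv n Φ = fun y => ∑ i, c i * l i ^ n * Real.exp (l i * y) := by
    rw [← iteratedDeriv_sum_mul_exp, ← hc]
    congr 1
    ext y
    simp [Finset.sum_apply]
  have moment (k : ℕ) : ∑ i, c i * l i ^ k = iteratedDeriv k Φ 0 := by simp [hΦ]
  intro x hx j _
  set g : ℝ → ℝ := fun t => t ^ j * Real.exp (x * t)
  set p := Lagrange.interpolate univ l fun i => g (l i)
  have hp_eval (i : Fin (N + 1)) : p.eval (l i) = g (l i) :=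
    Lagrange.eval_interpolate_at_node _ hl.injOn (mem_univ i)
  have hp_deg : p.natDegree ≤ N := by
    have := Lagrange.degree_interpolate_lt (fun i => g (l i)) hl.injOn (s := univ)
    rw [card_univ, Fintype.card_fin] at this
    exact natDegree_le_of_degree_le (Order.le_of_lt_succ this)
  have hΦ_eq_coeff : iteratedDeriv j Φ x = p.coeff N := calc
    _ = ∑ i, c i * p.eval (l i) := by simp only [hΦ, hp_eval, g, mul_comm x, mul_assoc]
    _ = p.coeff N := sum_mul_eval_eq_coeff (fun k hk => by rw [moment, hΦ0 k hk])
        (by rw [moment, hΦN]) hp_deg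
  obtain ⟨ξ, hξ, hgξ⟩ := exists_iteratedDeriv_eq_factorial_mul_coeff (f := g) (by fun_prop)
    ((card_image_of_injective univ hl).trans (card_fin _)) hp_deg (by simpa using hp_eval)
  have hξ_nonneg : 0 ≤ ξ :=
    convexHull_min (by simpa [Set.subset_def] using hlnonneg) (convex_Ici 0) hξ
  have hg_deriv := iteratedDeriv_pow_mul_exp_nonneg hx.le hξ_nonneg j N
  rw [hgξ] at hg_deriv
  rw [hΦ_eq_coeff]
  exact nonneg_of_mul_nonneg_right hg_deriv (by positivity)

/-- For `N` odd and pairwise distinct nonnegative `λ_0, …, λ_N`, the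
fundamental function satisfies `Φ_N^{(j)}(x) ≥ 0` for all `x > 0` and all `j ≥ N`. -/
theorem fundamental_function_derivatives_nonneg
    (N : ℕ) (hN : 0 < N) (hNodd : Odd N)
    (l : Fin (N + 1) → ℝ) (hl : Function.Injective l) (hlnonneg : ∀ j, 0 ≤ l j)
    (Φ : ℝ → ℝ)
    (hΦmem : Φ ∈ Submodule.span ℝ
        (Set.range (fun j : Fin (N + 1) => fun x : ℝ => Real.exp (l j * x))))
    (hΦ0 : ∀ j < N, iteratedDeriv j Φ 0 = 0)
    (hΦN : iteratedDeriv N Φ 0 = 1) :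
    ∀ x : ℝ, 0 < x → ∀ j : ℕ, N ≤ j → 0 ≤ iteratedDeriv j Φ x :=
  fundamental_function_derivatives_nonneg_general N l hl hlnonneg Φ hΦmem hΦ0 hΦN
end

section
/- Let N be an odd positive integer and let λ_0, …, λ_N be pairwise distinct positive real numbers. Assume Φ_N^{(j)}(x) ≥ 0 for every real x > 0 and every integer j ≥ 0. Then for every x > 0, every nonnegative integer k with 2k ≤ N, and every vector p = (p_0, …, p_k) ∈ ℝ^{k+1}, one has Σ_{i=0}^{k} Σ_{j=0}^{k} p_i p_j b_{i+j}(x) ≥ 0. -/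
/-!
By Taylor's formula with integral remainder at `0` and the normalisation
`Φ⁽ʲ⁾(0) = δ_{jN}`, for `n ≤ N` one has `b_n(x) = xⁿ + ∫₀ˣ (x - t)ⁿ Φ⁽ᴺ⁺¹⁾(t) dt`.
Hence `b_n(x)` is the `n`-th moment of a positive measure (a point mass at `x` plus
`Φ⁽ᴺ⁺¹⁾(x - s) ds` on `[0, x]`), and the Hankel form of such moments is a sum of squares:
`∑ pᵢ pⱼ b_{i+j}(x) = (∑ pᵢ xⁱ)² + ∫₀ˣ (∑ pᵢ (x - t)ⁱ)² Φ⁽ᴺ⁺¹⁾(t) dt ≥ 0`.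
-/

open Finset Set
open scoped Nat ContDiff

theorem contDiff_of_mem_span {𝕜 E F : Type*} [NontriviallyNormedField 𝕜]
    [NormedAddCommGroup E] [NormedSpace 𝕜 E] [NormedAddCommGroup F] [NormedSpace 𝕜 F]
    {n : WithTop ℕ∞} {S : Set (E → F)} (hS : ∀ g ∈ S, ContDiff 𝕜 n g) {f : E → F}
    (hf : f ∈ Submodule.span 𝕜 S) : ContDiff 𝕜 n f := by
  induction hf using Submodule.span_induction with
  | mem g hg => exact hS g hg
  | zero => exact contDiff_const
  | add g h _ _ hg hh => exact hg.add hh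
  | smul c g _ hg => exact hg.const_smul c

theorem iteratedDeriv_iteratedDeriv {𝕜 F : Type*} [NontriviallyNormedField 𝕜]
    [NormedAddCommGroup F] [NormedSpace 𝕜 F] (m n : ℕ) (f : 𝕜 → F) :
    iteratedDeriv m (iteratedDeriv n f) = iteratedDeriv (m + n) f := by
  simp only [iteratedDeriv_eq_iterate, Function.iterate_add]
  rfl

theorem taylor_integral_remainder_iteratedDeriv {E : Type*} [NormedAddCommGroup E]
    [NormedSpace ℝ E] [CompleteSpace E] {f : ℝ → E} {n : ℕ} (hf : ContDiff ℝ (n + 1 : ℕ) f)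
    (x₀ x : ℝ) :
    f x = ∑ k ∈ range (n + 1), ((k ! : ℝ)⁻¹ * (x - x₀) ^ k) • iteratedDeriv k f x₀ +
      ∫ t in x₀..x, ((x - t) ^ n / n !) • iteratedDeriv (n + 1) f t := by
  rcases eq_or_ne x₀ x with rfl | hx
  · rw [sum_range_succ', sum_eq_zero fun k _ => by simp]
    simp
  have hU : UniqueDiffOn ℝ (uIcc x₀ x) := uniqueDiffOn_uIcc hx
  have hwithin : ∀ k ≤ n + 1, ∀ t ∈ uIcc x₀ x,
      iteratedDerivWithin k f (uIcc x₀ x) t = iteratedDeriv k f t := fun k hk t ht =>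
    iteratedDerivWithin_eq_iteratedDeriv hU ((hf.of_le (by exact_mod_cast hk)).contDiffAt) ht
  have htaylor := taylor_integral_remainder (x₀ := x₀) (x := x) hf.contDiffOn
  rw [taylor_within_apply, intervalIntegral.integral_congr fun t ht => by
    rw [hwithin (n + 1) le_rfl t ht], sum_congr rfl fun k hk => by
    rw [hwithin k (mem_range.1 hk).le x₀ left_mem_uIcc]] at htaylor
  rw [← htaylor, add_sub_cancel]

theorem factorial_mul_iteratedDeriv_sub_eq_pow_add_integral {Φ : ℝ → ℝ} {N r : ℕ}
    (hΦ : ContDiff ℝ (N + 1 : ℕ) Φ) (hΦ0 : ∀ j < N, iteratedDeriv j Φ 0 = 0)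
    (hΦN : iteratedDeriv N Φ 0 = 1) (hr : r ≤ N) (x : ℝ) :
    r ! * iteratedDeriv (N - r) Φ x
      = x ^ r + ∫ t in (0 : ℝ)..x, (x - t) ^ r * iteratedDeriv (N + 1) Φ t := by
  have hsmooth : ContDiff ℝ (r + 1 : ℕ) (iteratedDeriv (N - r) Φ) := by
    rw [iteratedDeriv_eq_iterate]
    exact ContDiff.iterate_deriv' _ _ (by rwa [show r + 1 + (N - r) = N + 1 by omega])
  rw [taylor_integral_remainder_iteratedDeriv hsmooth 0 x, sum_range_succ,
    sum_eq_zero fun k hk => by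
      rw [iteratedDeriv_iteratedDeriv, hΦ0 _ (by have := mem_range.1 hk; omega), smul_zero],
    iteratedDeriv_iteratedDeriv, Nat.add_sub_cancel' hr, hΦN, iteratedDeriv_iteratedDeriv,
    show r + 1 + (N - r) = N + 1 by omega]
  simp only [smul_eq_mul, zero_add, sub_zero, mul_one, mul_add,
    ← intervalIntegral.integral_const_mul]
  congr 1
  · field_simp
  · congr 1 with t
    field_simp

theorem sum_sum_mul_pow_add_eq_sq {ι R : Type*} [Fintype ι] [CommSemiring R] (e : ι → ℕ)
    (p : ι → R) (y : R) :
    ∑ i, ∑ j, p i * p j * y ^ (e i + e j) = (∑ i, p i * y ^ e i) ^ 2 := by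
  rw [sq, sum_mul_sum]
  exact sum_congr rfl fun i _ => sum_congr rfl fun j _ => by ring

theorem sum_sum_mul_integral_pow_add_mul_nonneg {ι : Type*} [Fintype ι] (e : ι → ℕ)
    (p : ι → ℝ) {a b : ℝ} (hab : a ≤ b) {u w : ℝ → ℝ} (hu : Continuous u) (hw : Continuous w)
    (hw0 : ∀ t ∈ Ioc a b, 0 ≤ w t) :
    0 ≤ ∑ i, ∑ j, p i * p j * ∫ t in a..b, u t ^ (e i + e j) * w t := by
  have hquad : ∫ t in a..b, (∑ i, p i * u t ^ e i) ^ 2 * w t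
      = ∑ i, ∑ j, p i * p j * ∫ t in a..b, u t ^ (e i + e j) * w t := by
    simp_rw [← sum_sum_mul_pow_add_eq_sq, sum_mul, mul_assoc,
      ← intervalIntegral.integral_const_mul]
    rw [intervalIntegral.integral_finsetSum fun i _ =>
      (by fun_prop : Continuous _).intervalIntegrable _ _]
    refine sum_congr rfl fun i _ => ?_
    rw [intervalIntegral.integral_finsetSum fun j _ =>
      (by fun_prop : Continuous _).intervalIntegrable _ _]
  rw [← hquad, intervalIntegral.integral_of_le hab]
  exact MeasureTheory.setIntegral_nonneg measurableSet_Ioc fun t ht =>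
    mul_nonneg (sq_nonneg _) (hw0 t ht)

theorem hankel_quadratic_form_nonneg_general
    (N : ℕ)
    (l : Fin (N + 1) → ℝ)
    (Φ : ℝ → ℝ)
    (hΦmem : Φ ∈ Submodule.span ℝ
        (Set.range (fun j : Fin (N + 1) => fun x : ℝ => Real.exp (l j * x))))
    (hΦ0 : ∀ j < N, iteratedDeriv j Φ 0 = 0)
    (hΦN : iteratedDeriv N Φ 0 = 1)
    (hΦnonneg : ∀ x : ℝ, 0 < x → ∀ j : ℕ, 0 ≤ iteratedDeriv j Φ x)
    (b : ℕ → ℝ → ℝ)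
    (hb : ∀ j ≤ N, b j = fun x => (Nat.factorial j : ℝ) * iteratedDeriv (N - j) Φ x) :
    ∀ x : ℝ, 0 < x → ∀ k : ℕ, 2 * k ≤ N → ∀ p : Fin (k + 1) → ℝ,
      0 ≤ ∑ i : Fin (k + 1), ∑ j : Fin (k + 1), p i * p j * b ((i : ℕ) + (j : ℕ)) x := by
  intro x hx k hk p
  have hΦ : ContDiff ℝ ∞ Φ := contDiff_of_mem_span (by
    rintro _ ⟨j, rfl⟩
    fun_prop) hΦmem
  have hb_eq : ∀ i j : Fin (k + 1), b (i + j) x = x ^ (i + j : ℕ)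
      + ∫ t in (0 : ℝ)..x, (x - t) ^ (i + j : ℕ) * iteratedDeriv (N + 1) Φ t := fun i j => by
    rw [hb _ (by omega)]
    exact factorial_mul_iteratedDeriv_sub_eq_pow_add_integral (hΦ.of_le (mod_cast le_top))
      hΦ0 hΦN (by omega) x
  simp_rw [hb_eq, mul_add, sum_add_distrib, sum_sum_mul_pow_add_eq_sq]
  exact add_nonneg (sq_nonneg _) <| sum_sum_mul_integral_pow_add_mul_nonneg _ p hx.le
    (by fun_prop) (hΦ.continuous_iteratedDeriv _ (mod_cast le_top)) fun t ht => hΦnonneg t ht.1 _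

/-- Under the nonnegativity assumption on all derivatives of `Φ_N` on
`(0, ∞)`, for every `x > 0`, every `k` with `2k ≤ N` and every `p ∈ ℝ^{k+1}`,
`Σ_{i,j=0}^{k} p_i p_j b_{i+j}(x) ≥ 0`. -/
theorem hankel_quadratic_form_nonneg
    (N : ℕ) (hN : 0 < N) (hNodd : Odd N)
    (l : Fin (N + 1) → ℝ) (hl : Function.Injective l) (hlpos : ∀ j, 0 < l j)
    (Φ : ℝ → ℝ)
    (hΦmem : Φ ∈ Submodule.span ℝ
        (Set.range (fun j : Fin (N + 1) => fun x : ℝ => Real.exp (l j * x))))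
    (hΦ0 : ∀ j < N, iteratedDeriv j Φ 0 = 0)
    (hΦN : iteratedDeriv N Φ 0 = 1)
    (hΦnonneg : ∀ x : ℝ, 0 < x → ∀ j : ℕ, 0 ≤ iteratedDeriv j Φ x)
    (b : ℕ → ℝ → ℝ)
    (hb : ∀ j ≤ N, b j = fun x => (Nat.factorial j : ℝ) * iteratedDeriv (N - j) Φ x) :
    ∀ x : ℝ, 0 < x → ∀ k : ℕ, 2 * k ≤ N → ∀ p : Fin (k + 1) → ℝ,
      0 ≤ ∑ i : Fin (k + 1), ∑ j : Fin (k + 1), p i * p j * b ((i : ℕ) + (j : ℕ)) x :=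
  hankel_quadratic_form_nonneg_general N l Φ hΦmem hΦ0 hΦN hΦnonneg b hb
end

section
/- Let α and β be real numbers with α > 0 and β > −1, and let m be a nonnegative integer. Then the (m+1)×(m+1) determinant of the Hankel matrix with (i,j)-entry (α)_{i+j} / (1+α+β)_{i+j}, for 0 ≤ i,j ≤ m, equals the product ∏_{k=0}^{m} [ k! · (α)_k · (1+β)_k ] / [ (α+β+k)_k · (1+α+β)_{2k} ]. -/
open Polynomial Finset

lemma poch_eval_prod (x : ℝ) (n : ℕ) :
    (ascPochhammer ℝ n).eval x = ∏ t ∈ range n, (x + t) := by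
  induction n with
  | zero => simp
  | succ n ih => rw [ascPochhammer_succ_eval, ih, prod_range_succ]

lemma poch_add (x : ℝ) (n m : ℕ) :
    (ascPochhammer ℝ (n + m)).eval x =
      (ascPochhammer ℝ n).eval x * (ascPochhammer ℝ m).eval (x + n) := by
  rw [← ascPochhammer_mul, eval_mul, eval_comp]
  simp

lemma poch_one (x : ℝ) : (ascPochhammer ℝ 1).eval x = x := by simp

lemma pascal_split (k : ℕ) (f : ℕ → ℝ) :
    ∑ a ∈ range (k + 2), (-1 : ℝ) ^ a * ((k+1).choose a : ℝ) * f a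
      = ∑ a ∈ range (k + 1), (-1 : ℝ) ^ a * (k.choose a : ℝ) * (f a - f (a + 1)) := by
  have h0 : ∑ a ∈ range (k + 2), (-1 : ℝ) ^ a * ((k+1).choose a : ℝ) * f a
      = (∑ a ∈ range (k + 1), (-1 : ℝ) ^ (a+1) * ((k+1).choose (a+1) : ℝ) * f (a+1))
        + (-1:ℝ)^0 * ((k+1).choose 0 : ℝ) * f 0 :=
    Finset.sum_range_succ' _ (k+1)
  have h1 : ∀ a, (((k+1).choose (a+1) : ℝ)) = (k.choose a : ℝ) + (k.choose (a+1) : ℝ) := by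
    intro a; rw [Nat.choose_succ_succ]; push_cast; ring
  rw [h0]
  have h2 : (∑ a ∈ range (k + 1), (-1 : ℝ) ^ (a+1) * ((k+1).choose (a+1) : ℝ) * f (a+1))
      = (∑ a ∈ range (k + 1), -((-1 : ℝ) ^ a * (k.choose a : ℝ) * f (a+1)))
        + (∑ a ∈ range (k + 1), (-1 : ℝ) ^ (a+1) * (k.choose (a+1) : ℝ) * f (a+1)) := by
    rw [← Finset.sum_add_distrib]
    refine Finset.sum_congr rfl fun a _ => ?_
    rw [h1]; ring
  rw [h2]
  have h3 : (∑ a ∈ range (k + 1), (-1 : ℝ) ^ (a+1) * (k.choose (a+1) : ℝ) * f (a+1))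
      + (-1:ℝ)^0 * ((k+1).choose 0 : ℝ) * f 0
      = ∑ a ∈ range (k + 1), (-1 : ℝ) ^ a * (k.choose a : ℝ) * f a := by
    rw [Finset.sum_range_succ' (fun a => (-1 : ℝ) ^ a * (k.choose a : ℝ) * f a) k]
    rw [Finset.sum_range_succ]
    simp [Nat.choose_succ_self]
  have h4 : ∑ a ∈ range (k + 1), (-1 : ℝ) ^ a * (k.choose a : ℝ) * (f a - f (a + 1))
      = (∑ a ∈ range (k + 1), (-1 : ℝ) ^ a * (k.choose a : ℝ) * f a)
        + (∑ a ∈ range (k + 1), -((-1 : ℝ) ^ a * (k.choose a : ℝ) * f (a+1))) := by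
    rw [← Finset.sum_add_distrib]
    refine Finset.sum_congr rfl fun a _ => ?_
    ring
  rw [h4, ← h3]; ring

lemma alt_sum_poly (k : ℕ) : ∀ f : ℝ[X], f.degree < (k : WithBot ℕ) →
    ∑ a ∈ range (k + 1), (-1 : ℝ) ^ a * (k.choose a : ℝ) * f.eval (a : ℝ) = 0 := by
  induction k with
  | zero =>
    intro f hf
    have : f = 0 := by
      rw [← Polynomial.degree_eq_bot]
      exact Nat.WithBot.lt_zero_iff.mp (by exact_mod_cast hf)
    simp [this]
  | succ k ih =>
    intro f hf
    by_cases hf0 : f = 0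
    · simp [hf0]
    · have key := pascal_split k (fun a => f.eval (a : ℝ))
      rw [key]
      set g : ℝ[X] := f - f.comp (X + C 1) with hg
      have hcompdeg : (f.comp (X + C 1)).natDegree = f.natDegree := by
        rw [Polynomial.natDegree_comp, Polynomial.natDegree_X_add_C, mul_one]
      have hcomplc : (f.comp (X + C 1)).leadingCoeff = f.leadingCoeff := by
        rw [Polynomial.leadingCoeff_comp (by rw [Polynomial.natDegree_X_add_C]; norm_num)]
        rw [(Polynomial.monic_X_add_C (1:ℝ)).leadingCoeff, one_pow, mul_one]
      have hcomp0 : f.comp (X + C 1) ≠ 0 := by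
        intro h
        apply hf0
        rw [← Polynomial.leadingCoeff_eq_zero, ← hcomplc, h, Polynomial.leadingCoeff_zero]
      have hdegeq : f.degree = (f.comp (X + C 1)).degree := by
        rw [Polynomial.degree_eq_natDegree hf0, Polynomial.degree_eq_natDegree hcomp0, hcompdeg]
      have hgdeg : g.degree < f.degree :=
        Polynomial.degree_sub_lt hdegeq hf0 hcomplc.symm
      have hfle : f.degree ≤ (k : WithBot ℕ) := by
        rcases Polynomial.degree_eq_natDegree hf0 ▸ hf with h
        rw [Polynomial.degree_eq_natDegree hf0]
        exact_mod_cast Nat.lt_succ_iff.mp (by exact_mod_cast h)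
      have hg' : g.degree < (k : WithBot ℕ) := lt_of_lt_of_le hgdeg hfle
      have := ih g hg'
      rw [← this]
      refine Finset.sum_congr rfl fun a _ => ?_
      have : g.eval (a : ℝ) = f.eval (a : ℝ) - f.eval ((a : ℝ) + 1) := by
        simp [hg]
      rw [this]
      push_cast
      ring

lemma alt_sum_inv (k : ℕ) : ∀ x : ℝ, 0 < x →
    ∑ a ∈ range (k + 1), (-1 : ℝ) ^ a * (k.choose a : ℝ) * ((x + a)⁻¹) =
      (k.factorial : ℝ) / ∏ a ∈ range (k + 1), (x + a) := by
  induction k with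
  | zero => intro x hx; simp
  | succ k ih =>
    intro x hx
    have hx1 : (0:ℝ) < x + 1 := by linarith
    have key := pascal_split k (fun a => (x + (a:ℝ))⁻¹)
    rw [key]
    have step : ∑ a ∈ range (k + 1), (-1 : ℝ) ^ a * (k.choose a : ℝ) *
          ((x + (a:ℝ))⁻¹ - (x + ((a+1 : ℕ):ℝ))⁻¹)
        = (∑ a ∈ range (k + 1), (-1 : ℝ) ^ a * (k.choose a : ℝ) * ((x + (a:ℝ))⁻¹))
          - ∑ a ∈ range (k + 1), (-1 : ℝ) ^ a * (k.choose a : ℝ) * (((x+1) + (a:ℝ))⁻¹) := by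
      rw [← Finset.sum_sub_distrib]
      refine Finset.sum_congr rfl fun a _ => ?_
      push_cast
      ring_nf
    rw [step, ih x hx, ih (x+1) hx1]
    have hprodpos : ∀ y : ℝ, 0 < y → ∀ n : ℕ, (0:ℝ) < ∏ a ∈ range n, (y + a) := by
      intro y hy n
      refine Finset.prod_pos fun a _ => by positivity
    have h1 : ∏ a ∈ range (k + 1 + 1), (x + a) = (∏ a ∈ range (k+1), (x + a)) * (x + ((k:ℝ)+1)) := by
      rw [prod_range_succ]; push_cast; ring_nf
    have h2 : ∏ a ∈ range (k + 1 + 1), (x + a) = x * ∏ a ∈ range (k+1), ((x+1) + a) := by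
      rw [Finset.prod_range_succ' (fun a => (x + (a:ℝ))) (k+1)]
      have e1 : (∏ a ∈ range (k+1), (x + ((a+1:ℕ):ℝ))) = ∏ a ∈ range (k+1), ((x+1) + a) :=
        Finset.prod_congr rfl fun a _ => by push_cast; ring
      rw [e1]
      push_cast
      ring
    have hA : (∏ a ∈ range (k+1), (x + a)) ≠ 0 := ne_of_gt (hprodpos x hx _)
    have hB : (∏ a ∈ range (k+1), ((x+1) + a)) ≠ 0 := ne_of_gt (hprodpos (x+1) hx1 _)
    have hC : (∏ a ∈ range (k+1+1), (x + a)) ≠ 0 := ne_of_gt (hprodpos x hx _)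
    rw [Nat.factorial_succ]
    field_simp
    push_cast
    linear_combination (k.factorial:ℝ) * (∏ a ∈ range (k+1), ((x+1)+a)) * h1 - (k.factorial:ℝ) * (∏ a ∈ range (k+1), (x+a)) * h2

lemma offdiag_sum (α γ : ℝ) (hα : 0 < α) (hγ : 0 < γ) (j e : ℕ) :
    ∑ a ∈ range (j + e + 2),
      (-1:ℝ)^a * (((j+e+1).choose a : ℕ) : ℝ) *
          (ascPochhammer ℝ a).eval (γ + j + e) / (ascPochhammer ℝ a).eval α *
        ((ascPochhammer ℝ (a + j)).eval α / (ascPochhammer ℝ (a + j)).eval γ) = 0 := by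
  have hjpos : (0:ℝ) < γ + j := by positivity
  have hEpos : 0 < (ascPochhammer ℝ e).eval (γ + j) := ascPochhammer_pos _ _ hjpos
  have hG1pos : 0 < (ascPochhammer ℝ j).eval γ := ascPochhammer_pos _ _ hγ
  set F : ℝ[X] := (∏ t ∈ range j, (X + C (α + t))) * (∏ t ∈ range e, (X + C (γ + j + t)))
    with hF
  have hm1 : (∏ t ∈ range j, (X + C (α + (t:ℝ)))).Monic :=
    monic_prod_of_monic _ _ fun t _ => monic_X_add_C _
  have hm2 : (∏ t ∈ range e, (X + C (γ + j + (t:ℝ)))).Monic :=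
    monic_prod_of_monic _ _ fun t _ => monic_X_add_C _
  have hFmonic : F.Monic := hm1.mul hm2
  have hd1 : (∏ t ∈ range j, (X + C (α + (t:ℝ)))).natDegree = j := by
    rw [natDegree_prod_of_monic _ _ fun t _ => monic_X_add_C _,
      ]
    simp only [natDegree_X_add_C]
    simp
  have hd2 : (∏ t ∈ range e, (X + C (γ + j + (t:ℝ)))).natDegree = e := by
    rw [natDegree_prod_of_monic _ _ fun t _ => monic_X_add_C _,
      ]
    simp only [natDegree_X_add_C]
    simp
  have hFdeg : F.natDegree = j + e := by
    rw [hF, hm1.natDegree_mul hm2, hd1, hd2]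
  have hFdeg' : F.degree < ((j + e + 1 : ℕ) : WithBot ℕ) := by
    rw [Polynomial.degree_eq_natDegree hFmonic.ne_zero, hFdeg]
    exact_mod_cast Nat.lt_succ_self _
  have hzero := alt_sum_poly (j + e + 1) F hFdeg'
  have hFeval : ∀ a : ℕ, F.eval (a:ℝ) =
      (ascPochhammer ℝ j).eval (α + a) * (ascPochhammer ℝ e).eval (γ + j + a) := by
    intro a
    rw [hF, eval_mul, eval_prod, eval_prod, poch_eval_prod, poch_eval_prod]
    congr 1
    · exact Finset.prod_congr rfl fun t _ => by
        simp only [eval_add, eval_X, eval_C]; ring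
    · exact Finset.prod_congr rfl fun t _ => by
        simp only [eval_add, eval_X, eval_C]; ring
  have hkey : ∀ a : ℕ, (ascPochhammer ℝ a).eval (γ + j + e) * (ascPochhammer ℝ e).eval (γ + j)
      = (ascPochhammer ℝ a).eval (γ + j) * (ascPochhammer ℝ e).eval (γ + j + a) := by
    intro a
    have h1 := poch_add (γ + j) e a
    have h2 := poch_add (γ + j) a e
    rw [add_comm e a, h2] at h1
    linarith [h1]
  have hstep : ∀ a ∈ range (j + e + 2),
      (-1:ℝ)^a * (((j+e+1).choose a : ℕ) : ℝ) *
          (ascPochhammer ℝ a).eval (γ + j + e) / (ascPochhammer ℝ a).eval α *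
        ((ascPochhammer ℝ (a + j)).eval α / (ascPochhammer ℝ (a + j)).eval γ)
      = ((ascPochhammer ℝ j).eval γ * (ascPochhammer ℝ e).eval (γ + j))⁻¹ *
          ((-1:ℝ)^a * (((j+e+1).choose a : ℕ) : ℝ) * F.eval (a:ℝ)) := by
    intro a _
    have hPaα : (0:ℝ) < (ascPochhammer ℝ a).eval α := ascPochhammer_pos _ _ hα
    have hPagj : (0:ℝ) < (ascPochhammer ℝ a).eval (γ + j) := ascPochhammer_pos _ _ hjpos
    have hnum : (ascPochhammer ℝ (a + j)).eval α
        = (ascPochhammer ℝ a).eval α * (ascPochhammer ℝ j).eval (α + a) := poch_add α a j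
    have hden : (ascPochhammer ℝ (a + j)).eval γ
        = (ascPochhammer ℝ j).eval γ * (ascPochhammer ℝ a).eval (γ + j) := by
      rw [add_comm a j]; exact poch_add γ j a
    rw [hnum, hden, hFeval a]
    field_simp
    linear_combination ((((j+e+1).choose a : ℕ) : ℝ) *
      (ascPochhammer ℝ j).eval (α + a)) * hkey a
  rw [Finset.sum_congr rfl hstep, ← Finset.mul_sum]
  rw [show j + e + 2 = (j + e + 1) + 1 from rfl, hzero, mul_zero]

lemma aux_div (s A G H c a r q' Pc : ℝ) (hA : A ≠ 0) (hG : G ≠ 0) (hH : H ≠ 0)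
    (hca : c + a ≠ 0) (hP : Pc * (c + a) = c * H) :
    s * Pc / A * (A * (r + (a + c) * q') / (G * H)) =
      c / G * (s * q') + c * r / G * (s * (c + a)⁻¹) := by
  have hPc : Pc = c * H / (c + a) := by
    field_simp
    linarith [hP]
  rw [hPc]
  field_simp
  ring

lemma diag_sum (α γ : ℝ) (hα : 0 < α) (hγ : 0 < γ) (k : ℕ) (hk : 1 ≤ k) :
    ∑ a ∈ range (k + 1),
      (-1:ℝ)^a * ((k.choose a : ℕ) : ℝ) *
          (ascPochhammer ℝ a).eval (γ + k - 1) / (ascPochhammer ℝ a).eval α *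
        ((ascPochhammer ℝ (a + k)).eval α / (ascPochhammer ℝ (a + k)).eval γ) =
      (-1:ℝ)^k * (k.factorial : ℝ) * (ascPochhammer ℝ k).eval (γ - α) /
        (ascPochhammer ℝ (2*k)).eval γ := by
  have hk1 : (1:ℝ) ≤ (k:ℝ) := by exact_mod_cast hk
  set c : ℝ := γ + k - 1 with hcdef
  have hc : 0 < c := by simp only [hcdef]; linarith
  set F : ℝ[X] := ∏ t ∈ range k, (X + C (α + t)) with hF
  have hFmonic : F.Monic := monic_prod_of_monic _ _ fun t _ => monic_X_add_C _
  have hFdeg : F.natDegree = k := by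
    rw [hF, natDegree_prod_of_monic _ _ fun t _ => monic_X_add_C _]
    simp only [natDegree_X_add_C]
    simp
  set q : ℝ[X] := F /ₘ (X - C (-c)) with hq
  set r : ℝ := F.eval (-c) with hrdef
  have hsplit : F = C r + (X - C (-c)) * q := by
    conv_lhs => rw [← modByMonic_add_div F (X - C (-c))]
    rw [modByMonic_X_sub_C_eq_C_eval]
  have hqdeg : q.degree < (k : WithBot ℕ) := by
    by_cases hq0 : q = 0
    · rw [hq0, degree_zero]; exact WithBot.bot_lt_coe _
    · rw [degree_eq_natDegree hq0, hq, natDegree_divByMonic F (monic_X_sub_C (-c)),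
        natDegree_X_sub_C, hFdeg]
      exact_mod_cast Nat.sub_lt (by omega) one_pos
  have hr : r = (-1:ℝ)^k * (ascPochhammer ℝ k).eval (γ - α) := by
    rw [hrdef, hF, eval_prod]
    have e1 : ∀ t ∈ range k, eval (-c) (X + C (α + (t:ℝ))) = (-1) * (c - α - t) := by
      intro t _
      simp only [eval_add, eval_X, eval_C]
      ring
    rw [Finset.prod_congr rfl e1, Finset.prod_mul_distrib, Finset.prod_const]
    congr 1
    · simp
    · rw [poch_eval_prod, ← Finset.prod_range_reflect (fun s => (γ - α + (s:ℝ))) k]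
      refine Finset.prod_congr rfl fun t ht => ?_
      have ht' : t ≤ k - 1 := by
        have := Finset.mem_range.mp ht; omega
      have : ((k - 1 - t : ℕ) : ℝ) = (k:ℝ) - 1 - t := by
        rw [Nat.cast_sub ht', Nat.cast_sub hk, Nat.cast_one]
      rw [this, hcdef]
      ring
  have hFeval : ∀ a : ℕ, (ascPochhammer ℝ k).eval (α + a) = r + ((a:ℝ) + c) * q.eval (a:ℝ) := by
    intro a
    have h1 : (ascPochhammer ℝ k).eval (α + a) = F.eval (a:ℝ) := by
      rw [hF, eval_prod, poch_eval_prod]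
      exact Finset.prod_congr rfl fun t _ => by
        simp only [eval_add, eval_X, eval_C]; ring
    rw [h1]
    conv_lhs => rw [hsplit]
    simp only [eval_add, eval_mul, eval_sub, eval_X, eval_C]
    ring
  have hratio : ∀ a : ℕ, (ascPochhammer ℝ a).eval c * (c + a)
      = c * (ascPochhammer ℝ a).eval (γ + k) := by
    intro a
    have h1 := poch_add c a 1
    have h2 := poch_add c 1 a
    rw [add_comm a 1, h2] at h1
    have e1 : (ascPochhammer ℝ 1).eval (c + (a:ℝ)) = c + a := by simp
    have e2 : (ascPochhammer ℝ 1).eval c = c := by simp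
    have e3 : c + ((1:ℕ):ℝ) = γ + k := by rw [hcdef]; push_cast; ring
    rw [e1, e2, e3] at h1
    linarith [h1]
  have hPkγ : (0:ℝ) < (ascPochhammer ℝ k).eval γ := ascPochhammer_pos _ _ hγ
  have hPkγk : (0:ℝ) < (ascPochhammer ℝ k).eval (γ + k) :=
    ascPochhammer_pos _ _ (by positivity)
  have hstep : ∀ a ∈ range (k + 1),
      (-1:ℝ)^a * ((k.choose a : ℕ) : ℝ) *
          (ascPochhammer ℝ a).eval (γ + k - 1) / (ascPochhammer ℝ a).eval α *
        ((ascPochhammer ℝ (a + k)).eval α / (ascPochhammer ℝ (a + k)).eval γ)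
      = (c / (ascPochhammer ℝ k).eval γ) * ((-1:ℝ)^a * (k.choose a : ℝ) * q.eval (a:ℝ))
        + (c * r / (ascPochhammer ℝ k).eval γ) *
            ((-1:ℝ)^a * (k.choose a : ℝ) * ((c + a)⁻¹)) := by
    intro a _
    have hPaα : (0:ℝ) < (ascPochhammer ℝ a).eval α := ascPochhammer_pos _ _ hα
    have hPagk : (0:ℝ) < (ascPochhammer ℝ a).eval (γ + k) :=
      ascPochhammer_pos _ _ (by positivity)
    have hca : (0:ℝ) < c + a := by positivity
    have hnum : (ascPochhammer ℝ (a + k)).eval α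
        = (ascPochhammer ℝ a).eval α * (ascPochhammer ℝ k).eval (α + a) := poch_add α a k
    have hden : (ascPochhammer ℝ (a + k)).eval γ
        = (ascPochhammer ℝ k).eval γ * (ascPochhammer ℝ a).eval (γ + k) := by
      rw [add_comm a k]; exact poch_add γ k a
    have hgk1 : γ + (k:ℝ) - 1 = c := hcdef.symm
    rw [hnum, hden, hFeval a, hgk1]
    exact aux_div ((-1:ℝ)^a * (k.choose a : ℝ)) _ _ _ c (a:ℝ) r (q.eval (a:ℝ)) _
      (ne_of_gt hPaα) (ne_of_gt hPkγ) (ne_of_gt hPagk) (ne_of_gt hca) (hratio a)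
  rw [Finset.sum_congr rfl hstep, Finset.sum_add_distrib, ← Finset.mul_sum, ← Finset.mul_sum,
    alt_sum_poly k q hqdeg, alt_sum_inv k c hc, mul_zero, zero_add]
  have hprod : ∏ a ∈ range (k + 1), (c + a) = (ascPochhammer ℝ (k+1)).eval c :=
    (poch_eval_prod c (k+1)).symm
  have hsplit2 : (ascPochhammer ℝ (k+1)).eval c = c * (ascPochhammer ℝ k).eval (γ + k) := by
    have h2 := poch_add c 1 k
    have e2 : (ascPochhammer ℝ 1).eval c = c := by simp
    have e3 : c + ((1:ℕ):ℝ) = γ + k := by rw [hcdef]; push_cast; ring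
    rw [e2, e3] at h2
    rw [show k + 1 = 1 + k from Nat.add_comm k 1]
    exact h2
  have h2k : (ascPochhammer ℝ (2*k)).eval γ
      = (ascPochhammer ℝ k).eval γ * (ascPochhammer ℝ k).eval (γ + k) := by
    rw [two_mul]; exact poch_add γ k k
  rw [hprod, hsplit2, hr, h2k]
  have hc0 : c ≠ 0 := ne_of_gt hc
  field_simp

/-- Chammam's formula: for real `α > 0`, `β > −1` and `m ≥ 0`,
`det_{0≤i,j≤m} [ (α)_{i+j} / (1+α+β)_{i+j} ]
  = ∏_{k=0}^{m} k! (α)_k (1+β)_k / ((α+β+k)_k (1+α+β)_{2k})`. -/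
theorem chammam_hankel_determinant
    (α β : ℝ) (hα : 0 < α) (hβ : -1 < β) (m : ℕ) :
    Matrix.det (Matrix.of (fun i j : Fin (m + 1) =>
        (ascPochhammer ℝ ((i : ℕ) + (j : ℕ))).eval α /
          (ascPochhammer ℝ ((i : ℕ) + (j : ℕ))).eval (1 + α + β))) =
    ∏ k ∈ Finset.range (m + 1),
      ((Nat.factorial k : ℝ) * (ascPochhammer ℝ k).eval α *
          (ascPochhammer ℝ k).eval (1 + β)) /
        ((ascPochhammer ℝ k).eval (α + β + k) *
          (ascPochhammer ℝ (2 * k)).eval (1 + α + β)) := by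
  have hγ : (0:ℝ) < 1 + α + β := by linarith
  set Mm : Matrix (Fin (m+1)) (Fin (m+1)) ℝ := Matrix.of (fun i j : Fin (m + 1) =>
      (ascPochhammer ℝ ((i : ℕ) + (j : ℕ))).eval α /
        (ascPochhammer ℝ ((i : ℕ) + (j : ℕ))).eval (1 + α + β)) with hMm
  set Cm : Matrix (Fin (m+1)) (Fin (m+1)) ℝ := Matrix.of (fun k a : Fin (m + 1) =>
      (-1:ℝ)^(a:ℕ) * (((k:ℕ).choose (a:ℕ) : ℕ) : ℝ) *
          (ascPochhammer ℝ (a:ℕ)).eval (1 + α + β + (k:ℕ) - 1) /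
        (ascPochhammer ℝ (a:ℕ)).eval α) with hCm
  have hentry : ∀ k j : Fin (m+1), (Cm * Mm) k j =
      ∑ a ∈ range ((k:ℕ) + 1),
        (-1:ℝ)^a * (((k:ℕ).choose a : ℕ) : ℝ) *
            (ascPochhammer ℝ a).eval (1 + α + β + (k:ℕ) - 1) / (ascPochhammer ℝ a).eval α *
          ((ascPochhammer ℝ (a + (j:ℕ))).eval α /
            (ascPochhammer ℝ (a + (j:ℕ))).eval (1 + α + β)) := by
    intro k j
    set g : ℕ → ℝ := fun a =>
      (-1:ℝ)^a * (((k:ℕ).choose a : ℕ) : ℝ) *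
          (ascPochhammer ℝ a).eval (1 + α + β + (k:ℕ) - 1) / (ascPochhammer ℝ a).eval α *
        ((ascPochhammer ℝ (a + (j:ℕ))).eval α /
          (ascPochhammer ℝ (a + (j:ℕ))).eval (1 + α + β)) with hg
    rw [Matrix.mul_apply]
    have h1 : ∑ a : Fin (m+1), Cm k a * Mm a j = ∑ a ∈ range (m+1), g a := by
      rw [← Fin.sum_univ_eq_sum_range g (m+1)]
      exact Finset.sum_congr rfl fun a _ => rfl
    rw [h1]
    refine (Finset.sum_subset (Finset.range_subset_range.mpr (by omega : (k:ℕ) + 1 ≤ m + 1))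
      fun a _ ha => ?_).symm
    have hka : (k:ℕ) < a := by
      simp only [Finset.mem_range] at ha; omega
    rw [hg]
    simp only []
    rw [Nat.choose_eq_zero_of_lt hka]
    simp
  have hRtri : (Cm * Mm).BlockTriangular id := by
    intro k j hjk
    have hjk' : (j:ℕ) < (k:ℕ) := hjk
    obtain ⟨e, he⟩ : ∃ e, (k:ℕ) = (j:ℕ) + e + 1 := ⟨(k:ℕ) - (j:ℕ) - 1, by omega⟩
    rw [hentry k j, he]
    have hpt : (1:ℝ) + α + β + (((j:ℕ) + e + 1 : ℕ) : ℝ) - 1 = 1 + α + β + (j:ℕ) + (e:ℝ) := by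
      push_cast; ring
    simp only [hpt]
    exact offdiag_sum α (1+α+β) hα hγ (j:ℕ) e
  have hdiagval : ∀ k : Fin (m+1), (Cm * Mm) k k =
      (-1:ℝ)^(k:ℕ) * (((k:ℕ).factorial : ℕ) : ℝ) * (ascPochhammer ℝ (k:ℕ)).eval (1+β) /
        (ascPochhammer ℝ (2*(k:ℕ))).eval (1+α+β) := by
    intro k
    rw [hentry k k]
    rcases Nat.eq_zero_or_pos (k:ℕ) with h0 | h1
    · rw [h0]
      norm_num
    · have h := diag_sum α (1+α+β) hα hγ (k:ℕ) h1
      have hba : (1:ℝ)+α+β - α = 1+β := by ring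
      rw [hba] at h
      exact h
  have hCtri : Cm.BlockTriangular OrderDual.toDual := by
    intro k a h
    have hka : (k:ℕ) < (a:ℕ) := h
    show (-1:ℝ)^(a:ℕ) * (((k:ℕ).choose (a:ℕ) : ℕ) : ℝ) *
          (ascPochhammer ℝ (a:ℕ)).eval (1 + α + β + (k:ℕ) - 1) /
        (ascPochhammer ℝ (a:ℕ)).eval α = 0
    rw [Nat.choose_eq_zero_of_lt hka]
    simp
  have hCkk : ∀ k : Fin (m+1), Cm k k =
      (-1:ℝ)^(k:ℕ) * (ascPochhammer ℝ (k:ℕ)).eval (1 + α + β + (k:ℕ) - 1) /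
        (ascPochhammer ℝ (k:ℕ)).eval α := by
    intro k
    show (-1:ℝ)^(k:ℕ) * (((k:ℕ).choose (k:ℕ) : ℕ) : ℝ) *
          (ascPochhammer ℝ (k:ℕ)).eval (1 + α + β + (k:ℕ) - 1) /
        (ascPochhammer ℝ (k:ℕ)).eval α = _
    rw [Nat.choose_self]
    norm_num
  have hpochne : ∀ k : ℕ, (ascPochhammer ℝ k).eval (1 + α + β + (k:ℝ) - 1) ≠ 0 := by
    intro k
    rcases Nat.eq_zero_or_pos k with h0 | h1
    · rw [h0]; simp
    · have h1' : (1:ℝ) ≤ (k:ℝ) := by exact_mod_cast h1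
      exact ne_of_gt (ascPochhammer_pos _ _ (by linarith))
  have hCkkne : ∀ k : Fin (m+1), Cm k k ≠ 0 := by
    intro k
    rw [hCkk k]
    have h1 : (ascPochhammer ℝ (k:ℕ)).eval α ≠ 0 := ne_of_gt (ascPochhammer_pos _ _ hα)
    have h2 := hpochne (k:ℕ)
    positivity
  have hdetC : Cm.det = ∏ k : Fin (m+1), Cm k k := Matrix.det_of_lowerTriangular Cm hCtri
  have hdetR : (Cm * Mm).det = ∏ k : Fin (m+1), (Cm * Mm) k k :=
    Matrix.det_of_upperTriangular hRtri
  have hdetCne : Cm.det ≠ 0 := by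
    rw [hdetC]
    exact Finset.prod_ne_zero_iff.mpr fun k _ => hCkkne k
  have hMdet : Mm.det = ∏ k : Fin (m+1), ((Cm * Mm) k k / Cm k k) := by
    have hmul : (Cm * Mm).det = Cm.det * Mm.det := Matrix.det_mul Cm Mm
    rw [Finset.prod_div_distrib, ← hdetR, ← hdetC, hmul, mul_comm, mul_div_assoc,
      div_self hdetCne, mul_one]
  rw [hMdet]
  have hfactor : ∀ k : Fin (m+1), (Cm * Mm) k k / Cm k k =
      (((k:ℕ).factorial : ℕ) : ℝ) * (ascPochhammer ℝ (k:ℕ)).eval α *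
          (ascPochhammer ℝ (k:ℕ)).eval (1 + β) /
        ((ascPochhammer ℝ (k:ℕ)).eval (α + β + (k:ℕ)) *
          (ascPochhammer ℝ (2 * (k:ℕ))).eval (1 + α + β)) := by
    intro k
    rw [hdiagval k, hCkk k]
    have hpt : α + β + ((k:ℕ):ℝ) = 1 + α + β + (k:ℕ) - 1 := by ring
    rw [hpt]
    have h1 : (ascPochhammer ℝ (k:ℕ)).eval α ≠ 0 := ne_of_gt (ascPochhammer_pos _ _ hα)
    have h2 := hpochne (k:ℕ)
    have h3 : (ascPochhammer ℝ (2*(k:ℕ))).eval (1+α+β) ≠ 0 :=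
      ne_of_gt (ascPochhammer_pos _ _ hγ)
    have h4 : ((-1:ℝ))^(k:ℕ) ≠ 0 := by positivity
    field_simp
  rw [Finset.prod_congr rfl fun k _ => hfactor k]
  rw [Fin.prod_univ_eq_prod_range (fun k =>
    ((k.factorial : ℕ) : ℝ) * (ascPochhammer ℝ k).eval α *
        (ascPochhammer ℝ k).eval (1 + β) /
      ((ascPochhammer ℝ k).eval (α + β + k) *
        (ascPochhammer ℝ (2 * k)).eval (1 + α + β))) (m+1)]
end

section
/- Let S ≥ 1 and k ≥ 0 be integers. Then the (k+1)×(k+1) Hankel matrix with (i,j)-entry (i+j)! / (S+i+j)!, for 0 ≤ i,j ≤ k, is positive definite; in particular every vector p ∈ ℝ^{k+1} satisfies Σ_{i,j=0}^{k} p_i p_j (i+j)!/(S+i+j)! ≥ 0, with equality only for p = 0. -/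
set_option maxHeartbeats 1000000

open intervalIntegral

/-- Beta-type integral with natural exponents. -/
lemma beta_nat (m : ℕ) : ∀ n : ℕ,
    (∫ x in (0:ℝ)..1, x ^ n * (1 - x) ^ m)
      = (Nat.factorial n : ℝ) * (Nat.factorial m) / (Nat.factorial (n + m + 1)) := by
  induction m with
  | zero =>
    intro n
    simp only [pow_zero, mul_one, integral_pow]
    rw [Nat.factorial_zero, Nat.add_zero, Nat.factorial_succ]
    rw [one_pow, zero_pow (by omega)]
    field_simp
    push_cast; ring
  | succ m ih =>
    intro n
    have hcont1 : IntervalIntegrable (fun x : ℝ => ((n:ℝ)+1) * (x ^ n * (1 - x) ^ (m+1))) MeasureTheory.volume 0 1 := by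
      exact (Continuous.intervalIntegrable (by fun_prop) 0 1)
    have hcont2 : IntervalIntegrable (fun x : ℝ => ((m:ℝ)+1) * (x ^ (n+1) * (1 - x) ^ m)) MeasureTheory.volume 0 1 := by
      exact (Continuous.intervalIntegrable (by fun_prop) 0 1)
    have key : (∫ x in (0:ℝ)..1,
        (((n:ℝ)+1) * (x ^ n * (1 - x) ^ (m+1)) - ((m:ℝ)+1) * (x ^ (n+1) * (1 - x) ^ m))) = 0 := by
      have : ∀ x ∈ Set.uIcc (0:ℝ) 1, HasDerivAt (fun y : ℝ => y ^ (n+1) * (1 - y) ^ (m+1))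
          (((n:ℝ)+1) * (x ^ n * (1 - x) ^ (m+1)) - ((m:ℝ)+1) * (x ^ (n+1) * (1 - x) ^ m)) x := by
        intro x _
        have h1 : HasDerivAt (fun y : ℝ => y ^ (n+1)) (((n:ℝ)+1) * x ^ n) x := by
          simpa using hasDerivAt_pow (n+1) x
        have h2 : HasDerivAt (fun y : ℝ => (1 - y) ^ (m+1))
            (-(((m:ℝ)+1) * (1 - x) ^ m)) x := by
          have := ((hasDerivAt_id x).const_sub 1).fun_pow (m+1)
          simpa using this
        have := h1.fun_mul h2
        refine this.congr_deriv ?_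
        push_cast
        ring
      rw [integral_eq_sub_of_hasDerivAt this (by exact (Continuous.intervalIntegrable (by fun_prop) 0 1))]
      norm_num
    rw [integral_sub hcont1 hcont2, integral_const_mul, integral_const_mul, sub_eq_zero] at key
    have hn1 : ((n:ℝ)+1) ≠ 0 := by positivity
    have step : (∫ x in (0:ℝ)..1, x ^ n * (1 - x) ^ (m+1))
        = ((m:ℝ)+1) / ((n:ℝ)+1) * ∫ x in (0:ℝ)..1, x ^ (n+1) * (1 - x) ^ m := by
      field_simp
      linarith [key]
    rw [step, ih (n+1)]
    have h1 : (Nat.factorial (n+1) : ℝ) = ((n:ℝ)+1) * Nat.factorial n := by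
      rw [Nat.factorial_succ]; push_cast; ring
    have h2 : (Nat.factorial (m+1) : ℝ) = ((m:ℝ)+1) * Nat.factorial m := by
      rw [Nat.factorial_succ]; push_cast; ring
    have h3 : n + 1 + m + 1 = n + (m+1) + 1 := by ring
    rw [h3] at *
    rw [h1, h2]
    have hf : (Nat.factorial (n + (m+1) + 1) : ℝ) ≠ 0 := by positivity
    field_simp

lemma quad_eq_integral (S k : ℕ) (hS : 1 ≤ S) (p : Fin (k+1) → ℝ) :
    (∑ i : Fin (k + 1), ∑ j : Fin (k + 1),
        p i * p j * ((Nat.factorial ((i : ℕ) + (j : ℕ)) : ℝ) /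
          (Nat.factorial (S + (i : ℕ) + (j : ℕ)) : ℝ)))
      = (1 / (Nat.factorial (S-1) : ℝ)) *
        ∫ x in (0:ℝ)..1, (∑ i : Fin (k+1), p i * x ^ (i:ℕ))^2 * (1 - x) ^ (S-1) := by
  have hfS : (Nat.factorial (S-1) : ℝ) ≠ 0 := by positivity
  have expand : ∀ x : ℝ, (∑ i : Fin (k+1), p i * x ^ (i:ℕ))^2 * (1 - x) ^ (S-1)
      = ∑ i : Fin (k+1), ∑ j : Fin (k+1),
          p i * p j * (x ^ ((i:ℕ)+(j:ℕ)) * (1 - x) ^ (S-1)) := by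
    intro x
    rw [sq, Finset.sum_mul_sum, Finset.sum_mul]
    refine Finset.sum_congr rfl (fun i _ => ?_)
    rw [Finset.sum_mul]
    refine Finset.sum_congr rfl (fun j _ => ?_)
    rw [pow_add]; ring
  have hc : ∀ i j : Fin (k+1),
      Continuous (fun x : ℝ => p i * p j * (x ^ ((i:ℕ)+(j:ℕ)) * (1 - x) ^ (S-1))) := by
    intro i j; fun_prop
  have hswap : (∫ x in (0:ℝ)..1, (∑ i : Fin (k+1), p i * x ^ (i:ℕ))^2 * (1 - x) ^ (S-1))
      = ∑ i : Fin (k+1), ∑ j : Fin (k+1),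
          p i * p j * ∫ x in (0:ℝ)..1, x ^ ((i:ℕ)+(j:ℕ)) * (1 - x) ^ (S-1) := by
    simp_rw [expand]
    rw [intervalIntegral.integral_finset_sum (μ := MeasureTheory.volume) (a := 0) (b := 1)
      (f := fun i x => ∑ j : Fin (k+1), p i * p j * (x ^ ((i:ℕ)+(j:ℕ)) * (1 - x) ^ (S-1)))
      (fun i _ => Continuous.intervalIntegrable (continuous_finset_sum _ (fun j _ => hc i j)) 0 1)]
    refine Finset.sum_congr rfl (fun i _ => ?_)
    rw [intervalIntegral.integral_finset_sum
      (fun j _ => Continuous.intervalIntegrable (hc i j) 0 1)]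
    refine Finset.sum_congr rfl (fun j _ => ?_)
    rw [intervalIntegral.integral_const_mul]
  rw [hswap, Finset.mul_sum]
  refine Finset.sum_congr rfl (fun i _ => ?_)
  rw [Finset.mul_sum]
  refine Finset.sum_congr rfl (fun j _ => ?_)
  rw [beta_nat (S-1) ((i:ℕ)+(j:ℕ))]
  have hse : (i:ℕ) + (j:ℕ) + (S-1) + 1 = S + (i:ℕ) + (j:ℕ) := by omega
  rw [hse]
  have h : (Nat.factorial (S + (i:ℕ) + (j:ℕ)) : ℝ) ≠ 0 := by positivity
  field_simp

lemma quad_pos (S k : ℕ) (hS : 1 ≤ S) (p : Fin (k+1) → ℝ) (hp : p ≠ 0) :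
    0 < (∑ i : Fin (k + 1), ∑ j : Fin (k + 1),
        p i * p j * ((Nat.factorial ((i : ℕ) + (j : ℕ)) : ℝ) /
          (Nat.factorial (S + (i : ℕ) + (j : ℕ)) : ℝ))) := by
  rw [quad_eq_integral S k hS p]
  have hfS : (0:ℝ) < 1 / (Nat.factorial (S-1) : ℝ) := by positivity
  refine mul_pos hfS ?_
  -- find a point where the polynomial is nonzero
  set P : Polynomial ℝ := ∑ i : Fin (k+1), Polynomial.monomial (i:ℕ) (p i) with hP
  have hPeval : ∀ x : ℝ, P.eval x = ∑ i : Fin (k+1), p i * x ^ (i:ℕ) := by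
    intro x
    rw [hP, Polynomial.eval_finset_sum]
    exact Finset.sum_congr rfl (fun i _ => by rw [Polynomial.eval_monomial])
  have hPne : P ≠ 0 := by
    obtain ⟨i₀, hi₀⟩ := Function.ne_iff.mp hp
    intro h
    apply hi₀
    have : P.coeff (i₀:ℕ) = p i₀ := by
      rw [hP, Polynomial.finset_sum_coeff]
      rw [Finset.sum_eq_single i₀]
      · simp [Polynomial.coeff_monomial]
      · intro j _ hj
        rw [Polynomial.coeff_monomial, if_neg (fun hc => hj (Fin.ext hc))]
      · simp
    rw [h] at this
    simpa using this.symm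
  have hroots := Polynomial.finite_setOf_isRoot hPne
  obtain ⟨c, hc⟩ := ((Set.Ioo_infinite (by norm_num : (0:ℝ) < 1)).diff hroots).nonempty
  obtain ⟨⟨hc0, hc1⟩, hcroot⟩ := hc
  have hPc : (∑ i : Fin (k+1), p i * c ^ (i:ℕ)) ≠ 0 := by
    rw [← hPeval]; exact hcroot
  refine intervalIntegral.integral_pos (by norm_num) ?_ ?_ ?_
  · exact Continuous.continuousOn (by fun_prop)
  · intro x hx
    exact mul_nonneg (sq_nonneg _) (pow_nonneg (by linarith [hx.2]) _)
  · refine ⟨c, ⟨le_of_lt hc0, le_of_lt hc1⟩, ?_⟩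
    exact mul_pos (by positivity) (pow_pos (by linarith) _)

/-- for integers `S ≥ 1` and `k ≥ 0`, the Hankel matrix with entries
`(i+j)! / (S+i+j)!` is positive definite; in particular
`Σ_{i,j} p_i p_j (i+j)!/(S+i+j)! ≥ 0` for all `p`, with equality only for `p = 0`. -/
theorem hankel_factorial_ratio_posDef (S k : ℕ) (hS : 1 ≤ S) :
    (Matrix.of (fun i j : Fin (k + 1) =>
        (Nat.factorial ((i : ℕ) + (j : ℕ)) : ℝ) /
          (Nat.factorial (S + (i : ℕ) + (j : ℕ)) : ℝ))).PosDef ∧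
    ∀ p : Fin (k + 1) → ℝ,
      (0 ≤ ∑ i : Fin (k + 1), ∑ j : Fin (k + 1),
        p i * p j * ((Nat.factorial ((i : ℕ) + (j : ℕ)) : ℝ) /
          (Nat.factorial (S + (i : ℕ) + (j : ℕ)) : ℝ))) ∧
      ((∑ i : Fin (k + 1), ∑ j : Fin (k + 1),
        p i * p j * ((Nat.factorial ((i : ℕ) + (j : ℕ)) : ℝ) /
          (Nat.factorial (S + (i : ℕ) + (j : ℕ)) : ℝ))) = 0 → p = 0) := by
  have hQnonneg : ∀ p : Fin (k+1) → ℝ,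
      0 ≤ ∑ i : Fin (k + 1), ∑ j : Fin (k + 1),
        p i * p j * ((Nat.factorial ((i : ℕ) + (j : ℕ)) : ℝ) /
          (Nat.factorial (S + (i : ℕ) + (j : ℕ)) : ℝ)) := by
    intro p
    by_cases hp : p = 0
    · subst hp; simp
    · exact le_of_lt (quad_pos S k hS p hp)
  refine ⟨Matrix.PosDef.of_dotProduct_mulVec_pos ?_ ?_, ?_⟩
  · -- Hermitian
    ext i j
    simp only [Matrix.conjTranspose_apply, Matrix.of_apply, star_trivial]
    have h1 : (j:ℕ) + (i:ℕ) = (i:ℕ) + (j:ℕ) := by omega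
    have h2 : S + (j:ℕ) + (i:ℕ) = S + (i:ℕ) + (j:ℕ) := by omega
    rw [h1, h2]
  · intro x hx
    have hq := quad_pos S k hS x hx
    have : (dotProduct (star x) (Matrix.mulVec (Matrix.of (fun i j : Fin (k + 1) =>
        (Nat.factorial ((i : ℕ) + (j : ℕ)) : ℝ) /
          (Nat.factorial (S + (i : ℕ) + (j : ℕ)) : ℝ))) x))
        = ∑ i : Fin (k + 1), ∑ j : Fin (k + 1),
          x i * x j * ((Nat.factorial ((i : ℕ) + (j : ℕ)) : ℝ) /
            (Nat.factorial (S + (i : ℕ) + (j : ℕ)) : ℝ)) := by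
      simp only [dotProduct, Matrix.mulVec, Matrix.of_apply, star_trivial, Pi.star_apply]
      refine Finset.sum_congr rfl (fun i _ => ?_)
      rw [Finset.mul_sum]
      refine Finset.sum_congr rfl (fun j _ => ?_)
      ring
    rw [this]
    exact hq
  · intro p
    refine ⟨hQnonneg p, ?_⟩
    intro h
    by_contra hp
    exact absurd h (ne_of_gt (quad_pos S k hS p hp))
end

section
/- Let S ≥ 1 and k ≥ 0 be integers. Then the (k+1)×(k+1) Hankel matrix with (i,j)-entry (i+j+1)! / (S+i+j+1)!, for 0 ≤ i,j ≤ k, is positive definite. -/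
open Polynomial Set intervalIntegral MeasureTheory
open scoped Nat Matrix

/-!
Writing `S = c + 1`, the Beta integral gives
`(n + 1)! / (n + c + 2)! = ∫₀¹ tⁿ · t (1 - t)ᶜ / c! dt`, so the matrix is the Hankel matrix of
moments of the weight `w t = t (1 - t)ᶜ / c!`, which is positive on `(0, 1)`. Its quadratic form at
a coefficient vector `x` is `∫₀¹ w p²` with `p = ∑ xᵢ Xⁱ`, and this is positive for `x ≠ 0`
because `p` then vanishes at only finitely many points.
-/

theorem integral_pow_mul_one_sub_pow (n m : ℕ) :
    ∫ t in (0 : ℝ)..1, t ^ n * (1 - t) ^ m = (n ! * m ! : ℝ) / (n + m + 1)! := by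
  have hbeta := Complex.betaIntegral_eq_Gamma_mul_div (n + 1) (m + 1)
    (by simp; positivity) (by simp; positivity)
  rw [show (n + 1 : ℂ) + (m + 1) = ↑(n + m + 1) + 1 by push_cast; ring,
    Complex.Gamma_nat_eq_factorial, Complex.Gamma_nat_eq_factorial,
    Complex.Gamma_nat_eq_factorial, Complex.betaIntegral] at hbeta
  simp only [add_sub_cancel_right, Complex.cpow_natCast] at hbeta
  rw [integral_congr (g := fun t : ℝ => ((t ^ n * (1 - t) ^ m : ℝ) : ℂ))
    (fun t _ => by push_cast; rfl), integral_ofReal] at hbeta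
  apply Complex.ofReal_injective
  rw [hbeta]
  push_cast
  rfl

theorem integral_mul_eval_sq_pos {w : ℝ → ℝ} {a b : ℝ} (hab : a < b)
    (hw : IntervalIntegrable w volume a b) (hw_pos : ∀ t ∈ Ioo a b, 0 < w t)
    {p : ℝ[X]} (hp : p ≠ 0) :
    0 < ∫ t in a..b, w t * p.eval t ^ 2 := by
  have hint : IntervalIntegrable (fun t => w t * p.eval t ^ 2) volume a b :=
    hw.mul_continuousOn (by fun_prop)
  have hnonneg : 0 ≤ᵐ[volume.restrict (uIoc a b)] fun t => w t * p.eval t ^ 2 := by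
    rw [uIoc_of_le hab.le]
    refine ae_restrict_of_ae_eq_of_ae_restrict Ioo_ae_eq_Ioc ?_
    rw [ae_restrict_iff' measurableSet_Ioo]
    filter_upwards with t ht using mul_nonneg (hw_pos t ht).le (sq_nonneg _)
  have hsupp : Ioo a b \ {t | p.IsRoot t} ⊆
      Function.support (fun t => w t * p.eval t ^ 2) ∩ Ioc a b := fun t ⟨ht, hroot⟩ =>
    ⟨mul_ne_zero (hw_pos t ht).ne' (pow_ne_zero 2 hroot), Ioo_subset_Ioc_self ht⟩
  rw [integral_pos_iff_support_of_nonneg_ae' hnonneg hint]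
  refine ⟨hab, lt_of_lt_of_le ?_ (measure_mono hsupp)⟩
  rw [measure_sdiff_null ((p.finite_setOfPred_isRoot hp).measure_zero _)]
  exact (Measure.measure_Ioo_pos _).mpr hab

noncomputable def momentMatrix (w : ℝ → ℝ) (a b : ℝ) (n : ℕ) : Matrix (Fin n) (Fin n) ℝ :=
  Matrix.of fun i j => ∫ t in a..b, t ^ (i + j : ℕ) * w t

namespace momentMatrix

variable {w : ℝ → ℝ} {a b : ℝ} {n : ℕ}

theorem isHermitian : (momentMatrix w a b n).IsHermitian := by
  ext i j
  simp [momentMatrix, add_comm]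

theorem dotProduct_mulVec (hw : IntervalIntegrable w volume a b) (x : Fin n → ℝ) :
    x ⬝ᵥ (momentMatrix w a b n *ᵥ x) = ∫ t in a..b, w t * (∑ i, x i * t ^ (i : ℕ)) ^ 2 := by
  have hint (i j : Fin n) :
      IntervalIntegrable (fun t => x i * x j * (t ^ (i + j : ℕ) * w t)) volume a b :=
    (hw.continuousOn_mul (continuous_pow _).continuousOn).const_mul _
  calc x ⬝ᵥ (momentMatrix w a b n *ᵥ x)
      = ∑ i : Fin n, ∑ j : Fin n, ∫ t in a..b, x i * x j * (t ^ (i + j : ℕ) * w t) := by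
        refine Finset.sum_congr rfl fun i _ => ?_
        rw [Matrix.mulVec, dotProduct, Finset.mul_sum]
        refine Finset.sum_congr rfl fun j _ => ?_
        rw [intervalIntegral.integral_const_mul, momentMatrix, Matrix.of_apply]
        ring
    _ = ∫ t in a..b, ∑ i : Fin n, ∑ j : Fin n, x i * x j * (t ^ (i + j : ℕ) * w t) := by
        rw [integral_finsetSum fun i _ => by
          simpa only [Finset.sum_fn] using IntervalIntegrable.sum _ fun j _ => hint i j]
        simp only [integral_finsetSum fun j _ => hint _ j]
    _ = ∫ t in a..b, w t * (∑ i, x i * t ^ (i : ℕ)) ^ 2 := by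
        refine integral_congr fun t _ => ?_
        rw [sq, Finset.sum_mul_sum, Finset.mul_sum]
        refine Finset.sum_congr rfl fun i _ => ?_
        rw [Finset.mul_sum]
        refine Finset.sum_congr rfl fun j _ => ?_
        ring

theorem posDef (hab : a < b) (hw : IntervalIntegrable w volume a b)
    (hw_pos : ∀ t ∈ Ioo a b, 0 < w t) : (momentMatrix w a b n).PosDef := by
  refine Matrix.posDef_iff_dotProduct_mulVec.mpr ⟨isHermitian, fun x hx => ?_⟩
  -- `p` is the polynomial of degree `< n` with coefficient vector `x`
  set p := (degreeLTEquiv ℝ n).symm x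
  have hp : (p : ℝ[X]) ≠ 0 := by simpa [p] using hx
  have heval (t : ℝ) : (p : ℝ[X]).eval t = ∑ i, x i * t ^ (i : ℕ) := by
    rw [eval_eq_sum_degreeLTEquiv p.2, Subtype.coe_eta, LinearEquiv.apply_symm_apply]
  simpa [dotProduct_mulVec hw, heval] using integral_mul_eval_sq_pos hab hw hw_pos hp

end momentMatrix

theorem factorial_div_factorial_add_eq_integral (n c : ℕ) :
    ((n + 1)! : ℝ) / (c + 1 + n + 1)! =
      ∫ t in (0 : ℝ)..1, t ^ n * (t * (1 - t) ^ c / c !) := by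
  rw [integral_congr (g := fun t : ℝ => t ^ (n + 1) * (1 - t) ^ c / c !) fun t _ => by ring,
    intervalIntegral.integral_div, integral_pow_mul_one_sub_pow,
    show n + 1 + c + 1 = c + 1 + n + 1 by ring]
  field_simp

/-- for integers `S ≥ 1` and `k ≥ 0`, the Hankel matrix with entries
`(i+j+1)! / (S+i+j+1)!` is positive definite. -/
theorem hankel_factorial_ratio_shifted_posDef (S k : ℕ) (hS : 1 ≤ S) :
    (Matrix.of (fun i j : Fin (k + 1) =>
        (Nat.factorial ((i : ℕ) + (j : ℕ) + 1) : ℝ) /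
          (Nat.factorial (S + (i : ℕ) + (j : ℕ) + 1) : ℝ))).PosDef := by
  obtain ⟨c, rfl⟩ := Nat.exists_eq_add_of_le' hS
  have hw : IntervalIntegrable (fun t : ℝ => t * (1 - t) ^ c / c !) volume 0 1 :=
    (by fun_prop : Continuous fun t : ℝ => t * (1 - t) ^ c / c !).intervalIntegrable 0 1
  have hw_pos : ∀ t ∈ Ioo (0 : ℝ) 1, 0 < t * (1 - t) ^ c / c ! := fun t ht =>
    div_pos (mul_pos ht.1 (pow_pos (sub_pos.mpr ht.2) c)) (by positivity)
  convert momentMatrix.posDef zero_lt_one hw hw_pos using 1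
  ext i j
  rw [momentMatrix, Matrix.of_apply, Matrix.of_apply, ← factorial_div_factorial_add_eq_integral,
    ← add_assoc]
end

section
/- Let S ≥ 1 and k ≥ 0 be integers. Then the determinant of the (k+1)×(k+1) Hankel matrix with (i,j)-entry (1)_{i+j}/(1+S)_{i+j}, for 0 ≤ i,j ≤ k, equals ∏_{m=0}^{k} (m!)^2 · (S)_m / [ (S+m)_m · (S+1)_{2m} ]. -/
/-!
With `x = S`, the entries are `x · B(i + j + 1, x)`, the moments of the weight `x (1 - t)^(x - 1)`
on `[0, 1]`. Conjugating the Hankel matrix by the triangular matrix of signed binomial coefficients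
`(-1)^a C(i, a)` (determinant `±1`) replaces `t^(i + j)` by `(1 - t)^(i + j)` and turns it into the
Cauchy-type matrix `x / (x + i + j)`. Cauchy's determinant formula, whose Vandermonde factors are
superfactorials here, gives `x^(k+1) sf(k)^2 / ∏ (x + i + j)`, and this product telescopes row by
row into the Pochhammer symbols on the right.
-/

open Finset Matrix
open scoped Nat fwdDiff

theorem ascPochhammer_eval_succ_left {R : Type*} [CommSemiring R] (n : ℕ) (x : R) :
    (ascPochhammer R (n + 1)).eval x = x * (ascPochhammer R n).eval (x + 1) := by
  simp [ascPochhammer_succ_left]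

theorem ascPochhammer_eval_mul_eval_add {R : Type*} [CommSemiring R] (n m : ℕ) (x : R) :
    (ascPochhammer R n).eval x * (ascPochhammer R m).eval (x + n) =
      (ascPochhammer R (n + m)).eval x := by
  simpa using congrArg (Polynomial.eval x) (ascPochhammer_mul (S := R) n m)

theorem ascPochhammer_eval_eq_prod_range {R : Type*} [CommSemiring R] (n : ℕ) (x : R) :
    (ascPochhammer R n).eval x = ∏ i ∈ range n, (x + i) := by
  induction n with
  | zero => simp
  | succ n ih => rw [ascPochhammer_succ_eval, ih, prod_range_succ]

theorem det_vandermonde_succ {R : Type*} [CommRing R] {n : ℕ} (v : Fin (n + 1) → R) :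
    det (vandermonde v) =
      (∏ i : Fin n, (v i.succ - v 0)) * det (vandermonde fun i => v i.succ) := by
  simp only [det_vandermonde, Fin.prod_univ_succ, Fin.prod_Ioi_zero, Fin.prod_Ioi_succ]

section Cauchy

variable {K : Type*} [Field K]

theorem det_inv_add_succ {n : ℕ} (x y : Fin (n + 1) → K) (h : ∀ i j, x i + y j ≠ 0) :
    det (of fun i j => (x i + y j)⁻¹) =
      (x 0 + y 0)⁻¹ * (∏ i : Fin n, (x i.succ - x 0) / (x i.succ + y 0)) *
        det (of fun i j : Fin n => (x i.succ + y j.succ)⁻¹) *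
        ∏ j : Fin n, (y j.succ - y 0) / (x 0 + y j.succ) := by
  -- clear the first column below the corner by subtracting multiples of the first row
  let c : Fin (n + 1) → K := fun i => if i = 0 then 0 else -(x 0 + y 0) / (x i + y 0)
  let A : Matrix (Fin (n + 1)) (Fin (n + 1)) K :=
    of fun i j => (x i + y j)⁻¹ + c i * (x 0 + y j)⁻¹
  have hA : det A = det (of fun i j => (x i + y j)⁻¹) :=
    det_eq_of_forall_row_eq_smul_add_const c 0 (by simp [c]) fun i j => rfl
  have hcol : ∀ i : Fin n, A i.succ 0 = 0 := fun i => by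
    simp only [A, c, of_apply, Fin.succ_ne_zero, if_false]
    field_simp [h i.succ 0, h 0 0]
    ring
  have hsub : A.submatrix Fin.succ Fin.succ =
      diagonal (fun i => (x i.succ - x 0) / (x i.succ + y 0)) *
        of (fun i j => (x i.succ + y j.succ)⁻¹) *
        diagonal (fun j => (y j.succ - y 0) / (x 0 + y j.succ)) := by
    ext i j
    simp only [A, c, submatrix_apply, of_apply, Fin.succ_ne_zero, if_false, diagonal_mul,
      mul_diagonal]
    field_simp [h i.succ 0, h 0 0, h 0 j.succ, h i.succ j.succ]
    ring
  rw [← hA, det_succ_column_zero, Fin.sum_univ_succ]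
  simp only [hcol, mul_zero, zero_mul, sum_const_zero, add_zero, Fin.succAbove_zero, hsub,
    det_mul, det_diagonal]
  simp [A, c, mul_assoc]

theorem det_inv_add {n : ℕ} (x y : Fin n → K) (h : ∀ i j, x i + y j ≠ 0) :
    det (of fun i j => (x i + y j)⁻¹) =
      det (vandermonde x) * det (vandermonde y) / ∏ i, ∏ j, (x i + y j) := by
  induction n with
  | zero => simp
  | succ n ih =>
    have hden : ∏ i, ∏ j, (x i + y j) = (x 0 + y 0) * (∏ j : Fin n, (x 0 + y j.succ)) *
        (∏ i : Fin n, (x i.succ + y 0)) * ∏ i : Fin n, ∏ j : Fin n, (x i.succ + y j.succ) := by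
      simp only [Fin.prod_univ_succ, prod_mul_distrib]
      ring
    rw [det_inv_add_succ x y h, ih _ _ fun i j => h _ _, det_vandermonde_succ x,
      det_vandermonde_succ y, hden, prod_div_distrib, prod_div_distrib]
    field_simp [h 0 0, prod_ne_zero_iff.2 fun (i : Fin n) _ => h i.succ 0,
      prod_ne_zero_iff.2 fun (j : Fin n) _ => h 0 j.succ]

end Cauchy

theorem sum_fin_neg_one_pow_mul_choose_mul {R : Type*} [CommRing R] (f : ℕ → R) (b : ℕ)
    {n i : ℕ} (hi : i < n) :
    ∑ a : Fin n, (-1) ^ (a : ℕ) * (i.choose a : R) * f (b + a) = (-1) ^ i * (Δ_[1])^[i] f b := by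
  calc ∑ a : Fin n, (-1) ^ (a : ℕ) * (i.choose a : R) * f (b + a)
      = ∑ a ∈ range n, (-1) ^ a * (i.choose a : R) * f (b + a) :=
        Fin.sum_univ_eq_sum_range (fun a => (-1) ^ a * (i.choose a : R) * f (b + a)) n
    _ = ∑ a ∈ range (i + 1), (-1) ^ a * (i.choose a : R) * f (b + a) := by
        refine (sum_subset (range_subset_range.2 hi) fun a _ ha => ?_).symm
        simp [Nat.choose_eq_zero_of_lt (not_lt.1 (mem_range.not.1 ha))]
    _ = (-1) ^ i * (Δ_[1])^[i] f b := by
        rw [fwdDiff_iter_eq_sum_shift, mul_sum]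
        refine sum_congr rfl fun a ha => ?_
        obtain ⟨c, rfl⟩ := Nat.exists_eq_add_of_le (Nat.lt_succ_iff.1 (mem_range.1 ha))
        rw [Nat.add_sub_cancel_left, zsmul_eq_mul, nsmul_eq_mul, mul_one]
        push_cast
        have hsq : ((-1 : R) ^ c) ^ 2 = 1 := by rw [← pow_mul, pow_mul', neg_one_sq, one_pow]
        linear_combination (-(-1) ^ a * ((a + c).choose a : R) * f (b + a)) * hsq

/-- `betaSeq x b = B(b + 1, x) = ∫₀¹ tᵇ (1 - t)^(x - 1) dt`, so that `fwdDiff_betaSeq` is the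
identity `tᵇ - tᵇ⁺¹ = tᵇ (1 - t)` under the integral. -/
noncomputable def betaSeq (x : ℝ) (b : ℕ) : ℝ := b ! / (ascPochhammer ℝ (b + 1)).eval x

theorem fwdDiff_betaSeq {x : ℝ} (hx : 0 < x) : Δ_[1] (betaSeq x) = -betaSeq (x + 1) := by
  ext b
  have h₁ := ascPochhammer_succ_eval (b + 1) x
  have h₂ := ascPochhammer_eval_succ_left (b + 1) x
  have := ascPochhammer_pos (b + 1) x hx
  have := ascPochhammer_pos (b + 1) (x + 1) (by linarith)
  simp only [fwdDiff, betaSeq, Pi.neg_apply, Nat.factorial_succ]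
  rw [h₁] at h₂ ⊢
  push_cast at h₂ ⊢
  field_simp
  linear_combination h₂

theorem fwdDiff_iter_betaSeq {x : ℝ} (hx : 0 < x) (n : ℕ) :
    (Δ_[1])^[n] (betaSeq x) = (-1 : ℝ) ^ n • betaSeq (x + n) := by
  induction n generalizing x with
  | zero => simp
  | succ n ih =>
    rw [Function.iterate_succ_apply, fwdDiff_betaSeq hx, ← neg_one_smul ℝ,
      fwdDiff_iter_const_smul, ih (by linarith), smul_smul, pow_succ', add_assoc]
    push_cast
    ring_nf

theorem sum_fin_neg_one_pow_mul_choose_mul_betaSeq {x : ℝ} (hx : 0 < x) (b : ℕ) {n i : ℕ}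
    (hi : i < n) :
    ∑ a : Fin n, (-1) ^ (a : ℕ) * (i.choose a : ℝ) * betaSeq x (b + a) = betaSeq (x + i) b := by
  rw [sum_fin_neg_one_pow_mul_choose_mul _ _ hi, fwdDiff_iter_betaSeq hx, Pi.smul_apply,
    smul_eq_mul, ← mul_assoc, ← pow_add, Even.neg_one_pow ⟨i, rfl⟩, one_mul]

theorem ascPochhammer_eval_one_div_eval_one_add {x : ℝ} (hx : 0 < x) (m : ℕ) :
    (ascPochhammer ℝ m).eval 1 / (ascPochhammer ℝ m).eval (1 + x) = x * betaSeq x m := by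
  have := (ascPochhammer_pos m (x + 1) (by linarith)).ne'
  rw [betaSeq, ascPochhammer_eval_succ_left, ascPochhammer_eval_one, add_comm 1 x]
  field_simp

theorem det_hankel_pochhammer_eq_det_div_add_add {x : ℝ} (hx : 0 < x) (n : ℕ) :
    det (of fun i j : Fin n => (ascPochhammer ℝ (i + j : ℕ)).eval 1 /
        (ascPochhammer ℝ (i + j : ℕ)).eval (1 + x)) =
      det (of fun i j : Fin n => x / (x + i + j)) := by
  set H : Matrix (Fin n) (Fin n) ℝ := of fun i j => (ascPochhammer ℝ (i + j : ℕ)).eval 1 /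
    (ascPochhammer ℝ (i + j : ℕ)).eval (1 + x)
  let P : Matrix (Fin n) (Fin n) ℝ := of fun i a => (-1) ^ (a : ℕ) * ((i : ℕ).choose a : ℝ)
  have hP : det P * det Pᵀ = 1 := by
    rw [det_transpose, det_of_isLowerTriangular P fun i j (hij : i < j) => by
      simp [P, Nat.choose_eq_zero_of_lt hij], ← prod_mul_distrib]
    exact prod_eq_one fun i _ => by simp [P, ← pow_add, Even.neg_one_pow ⟨(i : ℕ), rfl⟩]
  have hPH : ∀ i b, (P * H) i b = x * betaSeq (x + i) b := fun i b => by
    simp only [mul_apply, P, H, of_apply, ascPochhammer_eval_one_div_eval_one_add hx,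
      add_comm _ (b : ℕ)]
    rw [← sum_fin_neg_one_pow_mul_choose_mul_betaSeq hx b i.isLt, mul_sum]
    exact sum_congr rfl fun a _ => by ring
  have hPHP : P * H * Pᵀ = of fun i j : Fin n => x / (x + i + j) := by
    ext i j
    have hβ := sum_fin_neg_one_pow_mul_choose_mul_betaSeq (x := x + i) (by positivity) 0 j.isLt
    simp only [zero_add] at hβ
    calc (P * H * Pᵀ) i j
        = x * ∑ b : Fin n, (-1) ^ (b : ℕ) * ((j : ℕ).choose b : ℝ) * betaSeq (x + i) b := by
          rw [mul_apply, mul_sum]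
          simp only [hPH, transpose_apply, P, of_apply]
          exact sum_congr rfl fun b _ => by ring
      _ = x / (x + i + j) := by rw [hβ]; simp [betaSeq, div_eq_mul_inv]
  rw [← hPHP, det_mul, det_mul, mul_right_comm, hP, one_mul]

theorem det_div_add_add {x : ℝ} (hx : 0 < x) (k : ℕ) :
    det (of fun i j : Fin (k + 1) => x / (x + i + j)) =
      x ^ (k + 1) * (k.superFactorial : ℝ) ^ 2 /
        ∏ i ∈ range (k + 1), ∏ j ∈ range (k + 1), (x + i + j) := by
  have hC : (of fun i j : Fin (k + 1) => x / (x + i + j)) =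
      of fun i j => x * (of fun i j : Fin (k + 1) => ((x + i) + (j : ℝ))⁻¹) i j := by
    ext i j
    simp [div_eq_mul_inv]
  rw [hC, det_mul_column, det_inv_add _ _ fun i j => by positivity,
    show (fun i : Fin (k + 1) => x + ((i : ℕ) : ℝ)) = fun i : Fin (k + 1) => ((i : ℕ) : ℝ) + x from
      funext fun i => add_comm _ _, det_vandermonde_add,
    det_vandermonde_id_eq_superFactorial, prod_const, card_univ, Fintype.card_fin,
    Fin.prod_univ_eq_prod_range (fun i => ∏ j : Fin (k + 1), (x + i + j)),
    prod_congr rfl fun (i : ℕ) _ => Fin.prod_univ_eq_prod_range (fun j : ℕ => x + i + j) (k + 1)]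
  ring

theorem prod_range_succ_prod_range_succ {M : Type*} [CommMonoid M] (f : ℕ → ℕ → M) (n : ℕ) :
    ∏ i ∈ range (n + 1), ∏ j ∈ range (n + 1), f i j =
      (∏ i ∈ range n, ∏ j ∈ range n, f i j) * (∏ i ∈ range n, f i n) *
        ∏ j ∈ range (n + 1), f n j := by
  rw [prod_range_succ, prod_congr rfl fun i _ => prod_range_succ (f i) n, prod_mul_distrib]

theorem pow_div_prod_range_prod_range_add_add {x : ℝ} (hx : 0 < x) (n : ℕ) :
    x ^ (n + 1) / ∏ i ∈ range (n + 1), ∏ j ∈ range (n + 1), (x + i + j) =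
      ∏ m ∈ range (n + 1), (ascPochhammer ℝ m).eval x /
        ((ascPochhammer ℝ m).eval (x + m) * (ascPochhammer ℝ (2 * m)).eval (x + 1)) := by
  induction n with
  | zero => simp [hx.ne']
  | succ n ih =>
    have hrow : ∏ i ∈ range (n + 1), (x + i + (n + 1 : ℕ)) =
        (ascPochhammer ℝ (n + 1)).eval (x + (n + 1 : ℕ)) := by
      rw [ascPochhammer_eval_eq_prod_range]
      exact prod_congr rfl fun i _ => by ring
    have hcol : ∏ j ∈ range (n + 2), (x + (n + 1 : ℕ) + j) =
        (ascPochhammer ℝ (n + 2)).eval (x + (n + 1 : ℕ)) :=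
      (ascPochhammer_eval_eq_prod_range _ _).symm
    -- both sides equal `(x)_(2n+3)`
    have hkey : x * (ascPochhammer ℝ (2 * (n + 1))).eval (x + 1) =
        (ascPochhammer ℝ (n + 1)).eval x * (ascPochhammer ℝ (n + 2)).eval (x + (n + 1 : ℕ)) := by
      rw [ascPochhammer_eval_mul_eval_add, ← ascPochhammer_eval_succ_left,
        show 2 * (n + 1) + 1 = n + 1 + (n + 2) by ring]
    have := ascPochhammer_pos (n + 1) (x + (n + 1 : ℕ)) (by positivity)
    have := ascPochhammer_pos (n + 2) (x + (n + 1 : ℕ)) (by positivity)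
    have := ascPochhammer_pos (2 * (n + 1)) (x + 1) (by positivity)
    rw [prod_range_succ_prod_range_succ, hrow, hcol, prod_range_succ _ (n + 1), ← ih]
    field_simp
    linear_combination x ^ (n + 1) * hkey

theorem det_hankel_pochhammer {x : ℝ} (hx : 0 < x) (k : ℕ) :
    det (of fun i j : Fin (k + 1) =>
        (ascPochhammer ℝ ((i : ℕ) + (j : ℕ))).eval 1 /
          (ascPochhammer ℝ ((i : ℕ) + (j : ℕ))).eval (1 + x)) =
      ∏ m ∈ range (k + 1), ((m ! : ℝ) ^ 2 * (ascPochhammer ℝ m).eval x) /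
        ((ascPochhammer ℝ m).eval (x + m) * (ascPochhammer ℝ (2 * m)).eval (x + 1)) := by
  rw [det_hankel_pochhammer_eq_det_div_add_add hx, det_div_add_add hx, mul_comm, mul_div_assoc,
    pow_div_prod_range_prod_range_add_add hx, ← Nat.prod_range_succ_factorial, Nat.cast_prod,
    ← prod_pow, ← prod_mul_distrib]
  simp only [mul_div_assoc]

/-- for integers `S ≥ 1` and `k ≥ 0`,
`det_{0≤i,j≤k}[ (1)_{i+j}/(1+S)_{i+j} ]
  = ∏_{m=0}^{k} (m!)^2 (S)_m / ((S+m)_m (S+1)_{2m})`. -/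
theorem hankel_pochhammer_determinant (S k : ℕ) (hS : 1 ≤ S) :
    Matrix.det (Matrix.of (fun i j : Fin (k + 1) =>
        (ascPochhammer ℝ ((i : ℕ) + (j : ℕ))).eval 1 /
          (ascPochhammer ℝ ((i : ℕ) + (j : ℕ))).eval (1 + (S : ℝ)))) =
    ∏ m ∈ Finset.range (k + 1),
      ((Nat.factorial m : ℝ) ^ 2 * (ascPochhammer ℝ m).eval (S : ℝ)) /
        ((ascPochhammer ℝ m).eval ((S : ℝ) + m) *
          (ascPochhammer ℝ (2 * m)).eval ((S : ℝ) + 1)) :=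
  det_hankel_pochhammer (by exact_mod_cast hS) k
end
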